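/- arXiv:2109.10749 — 7 statements merged into one kernel-verified Lean document; each statement's English description precedes it below -/
import Mathlib

section
/- A countably infinite causal set Ψ admits a natural labeling by ℕ if and only if Ψ is past-finite. -/
/-- A countably infinite causal set Ψ admits a natural labeling by ℕ
if and only if Ψ is past-finite. -/
theorem stmt_0 {Ψ : Type*} [PartialOrder Ψ] [Countable Ψ] [Infinite Ψ]
    (hlocfin : ∀ x y : Ψ, {z : Ψ | x < z ∧ z < y}.Finite) :
    (∃ f : ℕ → Ψ, Function.Bijective f ∧ ∀ i j : ℕ, f i < f j → i < j) ↔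
      (∀ x : Ψ, {y : Ψ | y < x}.Finite) := by
  classical
  constructor
  · rintro ⟨f, hbij, hmono⟩ x
    obtain ⟨k, rfl⟩ := hbij.surjective x
    apply Set.Finite.subset ((Set.finite_Iio k).image f)
    intro y hy
    obtain ⟨j, rfl⟩ := hbij.surjective y
    exact ⟨j, hmono _ _ hy, rfl⟩
  · intro hpast
    obtain ⟨g, hg⟩ := exists_injective_nat Ψ
    -- the "down set" of x as a Finset
    set D : Ψ → Finset Ψ := fun x => insert x (hpast x).toFinset with hD
    have hmemD : ∀ x z : Ψ, z ∈ D x ↔ z ≤ x := by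
      intro x z
      simp only [hD, Finset.mem_insert, Set.Finite.mem_toFinset, Set.mem_setOf_eq]
      constructor
      · rintro (rfl | h) <;> [exact le_rfl; exact h.le]
      · intro h
        rcases eq_or_lt_of_le h with h | h
        · exact Or.inl h
        · exact Or.inr h
    set φ : Ψ → ℕ := fun x => ∑ i ∈ (D x).image g, 2 ^ i with hφ
    have hDinj : Function.Injective D := by
      intro x y hxy
      have hx : x ∈ D y := hxy ▸ (hmemD x x).2 le_rfl
      have hy : y ∈ D x := hxy ▸ (hmemD y y).2 le_rfl
      exact le_antisymm ((hmemD y x).1 hx) ((hmemD x y).1 hy)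
    have hφinj : Function.Injective φ := by
      intro x y hxy
      have := Finset.geomSum_injective (le_refl 2) hxy
      exact hDinj (Finset.image_injective hg this)
    have hφmono : ∀ x y : Ψ, x < y → φ x < φ y := by
      intro x y hxy
      apply Finset.sum_lt_sum_of_subset
        (Finset.image_subset_image (fun z hz => (hmemD y z).2 (((hmemD x z).1 hz).trans hxy.le)))
        (i := g y) (Finset.mem_image_of_mem g ((hmemD y y).2 le_rfl))
      · intro hmem
        obtain ⟨z, hz, hgz⟩ := Finset.mem_image.1 hmem
        exact absurd (hg hgz ▸ (hmemD x z).1 hz) (not_le_of_gt hxy)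
      · positivity
      · intro j _ _; positivity
    set p : ℕ → Prop := fun n => n ∈ Set.range φ with hp
    have hinf : (setOf p).Infinite := by
      have : setOf p = Set.range φ := rfl
      rw [this]
      exact Set.infinite_range_of_injective hφinj
    set f : ℕ → Ψ := fun n => Function.invFun φ (Nat.nth p n) with hf
    have hφf : ∀ n, φ (f n) = Nat.nth p n := by
      intro n
      have := Nat.nth_mem_of_infinite hinf n
      exact Function.invFun_eq this
    refine ⟨f, ⟨?_, ?_⟩, ?_⟩
    · intro i j hij
      have : Nat.nth p i = Nat.nth p j := by rw [← hφf, ← hφf, hij]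
      exact Nat.nth_injective hinf this
    · intro x
      have : φ x ∈ Set.ofPred p := ⟨x, rfl⟩
      rw [← Nat.range_nth_of_infinite hinf] at this
      obtain ⟨n, hn⟩ := this
      exact ⟨n, hφinj (by rw [hφf, hn])⟩
    · intro i j hij
      have := hφmono _ _ hij
      rw [hφf, hφf, Nat.nth_lt_nth hinf] at this
      exact this
end

section
/- A countably infinite causal set Ψ admits a natural labeling by the negative integers ℤ⁻ if and only if Ψ is future-finite. -/
open Classical

section aux
variable {Ψ : Type*} [PartialOrder Ψ]

/-- The minimal-index eligible element: not in `s`, all strictly above it are in `s`. -/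
noncomputable def pickIdx (e : ℕ ≃ Ψ)
    (H : ∀ s : Finset Ψ, ∃ k, e k ∉ s ∧ ∀ y, e k < y → y ∈ s) (s : Finset Ψ) : ℕ :=
  Nat.find (H s)

/-- The set of elements chosen before step `n`. -/
noncomputable def Sfn (e : ℕ ≃ Ψ)
    (H : ∀ s : Finset Ψ, ∃ k, e k ∉ s ∧ ∀ y, e k < y → y ∈ s) : ℕ → Finset Ψ
  | 0 => ∅
  | n+1 => insert (e (pickIdx e H (Sfn e H n))) (Sfn e H n)

variable (e : ℕ ≃ Ψ) (H : ∀ s : Finset Ψ, ∃ k, e k ∉ s ∧ ∀ y, e k < y → y ∈ s)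

noncomputable def gfn (n : ℕ) : Ψ := e (pickIdx e H (Sfn e H n))

lemma gfn_not_mem (n : ℕ) : gfn e H n ∉ Sfn e H n := (Nat.find_spec (H (Sfn e H n))).1

lemma gfn_lt_mem {n : ℕ} {y : Ψ} (h : gfn e H n < y) : y ∈ Sfn e H n :=
  (Nat.find_spec (H (Sfn e H n))).2 y h

lemma pickIdx_le {s : Finset Ψ} {k : ℕ} (hk : e k ∉ s ∧ ∀ y, e k < y → y ∈ s) :
    pickIdx e H s ≤ k := Nat.find_le hk

lemma mem_Sfn {x : Ψ} {n : ℕ} : x ∈ Sfn e H n ↔ ∃ k < n, gfn e H k = x := by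
  induction n with
  | zero => simp [Sfn]
  | succ n ih =>
    simp only [Sfn, Finset.mem_insert, ih]
    constructor
    · rintro (h | ⟨k, hk, h⟩)
      · exact ⟨n, Nat.lt_succ_self n, h.symm⟩
      · exact ⟨k, hk.trans (Nat.lt_succ_self n), h⟩
    · rintro ⟨k, hk, h⟩
      rcases Nat.lt_succ_iff_lt_or_eq.mp hk with hk | rfl
      · exact Or.inr ⟨k, hk, h⟩
      · exact Or.inl h.symm

lemma Sfn_mono {n m : ℕ} (h : n ≤ m) : Sfn e H n ⊆ Sfn e H m := by
  intro x hx
  rw [mem_Sfn] at hx ⊢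
  obtain ⟨k, hk, hx⟩ := hx
  exact ⟨k, hk.trans_le h, hx⟩

lemma gfn_injective : Function.Injective (gfn e H) := by
  have key : ∀ m n : ℕ, m < n → gfn e H m ≠ gfn e H n := by
    intro m n hlt h
    have hm : gfn e H m ∈ Sfn e H n :=
      Sfn_mono e H hlt ((mem_Sfn e H).mpr ⟨m, Nat.lt_succ_self m, rfl⟩)
    rw [h] at hm
    exact gfn_not_mem e H n hm
  intro m n h
  rcases lt_trichotomy m n with hlt | heq | hlt
  · exact absurd h (key m n hlt)
  · exact heq
  · exact absurd h.symm (key n m hlt)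

lemma gfn_order {n m : ℕ} (h : gfn e H n < gfn e H m) : m < n := by
  have := gfn_lt_mem e H h
  rw [mem_Sfn] at this
  obtain ⟨k, hk, hkm⟩ := this
  have := gfn_injective e H hkm
  omega

end aux

/-- Existence of eligible elements, from future-finiteness and infiniteness. -/
lemma exists_eligible {Ψ : Type*} [PartialOrder Ψ] [Infinite Ψ] (e : ℕ ≃ Ψ)
    (hfut : ∀ x : Ψ, {y : Ψ | x < y}.Finite) (s : Finset Ψ) :
    ∃ k, e k ∉ s ∧ ∀ y, e k < y → y ∈ s := by
  obtain ⟨x0, hx0⟩ := Infinite.exists_notMem_finset s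
  set A : Set Ψ := {y | x0 ≤ y ∧ y ∉ s} with hA
  have hAfin : A.Finite := by
    apply ((hfut x0).insert x0).subset
    rintro y ⟨hy, -⟩
    rcases eq_or_lt_of_le hy with rfl | hy
    · exact Set.mem_insert _ _
    · exact Set.mem_insert_of_mem _ hy
  have hAne : A.Nonempty := ⟨x0, le_refl x0, hx0⟩
  obtain ⟨z, hzA, hzmax⟩ := hAfin.exists_maximalFor id A hAne
  refine ⟨e.symm z, ?_, ?_⟩
  · simpa using hzA.2
  · intro y hy
    rw [e.apply_symm_apply] at hy
    by_contra hys
    have hyA : y ∈ A := ⟨hzA.1.trans hy.le, hys⟩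
    exact absurd (hzmax hyA hy.le) (not_le_of_gt hy)

/-- Main enumeration lemma: a reverse natural labeling by ℕ. -/
lemma aux_enum {Ψ : Type*} [PartialOrder Ψ] [Countable Ψ] [Infinite Ψ]
    (hfut : ∀ x : Ψ, {y : Ψ | x < y}.Finite) :
    ∃ g : ℕ → Ψ, Function.Bijective g ∧ ∀ n m, g n < g m → m < n := by
  obtain ⟨den⟩ := nonempty_denumerable Ψ
  let e : ℕ ≃ Ψ := (Denumerable.eqv Ψ).symm
  have H := exists_eligible e hfut
  refine ⟨gfn e H, ⟨gfn_injective e H, ?_⟩, fun n m h => gfn_order e H h⟩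
  -- surjectivity
  intro x
  by_contra hx
  push_neg at hx
  have hxnr : x ∉ Set.range (gfn e H) := by
    rintro ⟨n, rfl⟩; exact hx n rfl
  -- take a maximal element z ≥ x not in the range
  set A : Set Ψ := {y | x ≤ y ∧ y ∉ Set.range (gfn e H)} with hA
  have hAfin : A.Finite := by
    apply ((hfut x).insert x).subset
    rintro y ⟨hy, -⟩
    rcases eq_or_lt_of_le hy with rfl | hy
    · exact Set.mem_insert _ _
    · exact Set.mem_insert_of_mem _ hy
  have hAne : A.Nonempty := ⟨x, le_refl x, hxnr⟩
  obtain ⟨z, hzA, hzmax⟩ := hAfin.exists_maximalFor id A hAne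
  have hz_not : z ∉ Set.range (gfn e H) := hzA.2
  -- everything strictly above z is in the range
  have habove : ∀ y, z < y → y ∈ Set.range (gfn e H) := by
    intro y hy
    by_contra hys
    have hyA : y ∈ A := ⟨hzA.1.trans hy.le, hys⟩
    exact absurd (hzmax hyA hy.le) (not_le_of_gt hy)
  -- find N with all of {y | z < y} inside Sfn N
  have hzfin := hfut z
  have hchoice : ∀ y ∈ hzfin.toFinset, ∃ k, y ∈ Sfn e H k := by
    intro y hy
    rw [Set.Finite.mem_toFinset] at hy
    obtain ⟨n, rfl⟩ := habove y hy
    exact ⟨n + 1, (mem_Sfn e H).mpr ⟨n, Nat.lt_succ_self n, rfl⟩⟩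
  choose F hF using hchoice
  set N : ℕ := hzfin.toFinset.attach.sup (fun y => F y.1 y.2) with hN
  have hNspec : ∀ y, z < y → y ∈ Sfn e H N := by
    intro y hy
    have hyt : y ∈ hzfin.toFinset := (Set.Finite.mem_toFinset _).mpr hy
    exact Sfn_mono e H (Finset.le_sup (Finset.mem_attach _ ⟨y, hyt⟩)) (hF y hyt)
  -- for n ≥ N, pickIdx ≤ K := e.symm z
  set K : ℕ := e.symm z with hK
  have hidx : ∀ n, N ≤ n → pickIdx e H (Sfn e H n) ≤ K := by
    intro n hn
    apply pickIdx_le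
    constructor
    · rw [e.apply_symm_apply]
      intro hmem
      obtain ⟨k, -, hkz⟩ := (mem_Sfn e H).mp hmem
      exact hz_not ⟨k, hkz⟩
    · rw [e.apply_symm_apply]
      intro y hy
      exact Sfn_mono e H hn (hNspec y hy)
  -- pigeonhole
  have hinj : Set.InjOn (fun n => pickIdx e H (Sfn e H n)) (Finset.Icc N (N + K + 1)) := by
    intro a _ b _ hab
    exact gfn_injective e H (congrArg e hab)
  have hmaps : ∀ n ∈ Finset.Icc N (N + K + 1),
      pickIdx e H (Sfn e H n) ∈ Finset.range (K + 1) := by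
    intro n hn
    rw [Finset.mem_Icc] at hn
    rw [Finset.mem_range]
    exact Nat.lt_succ_of_le (hidx n hn.1)
  have hcard := Finset.card_le_card_of_injOn _ hmaps hinj
  rw [Nat.card_Icc, Finset.card_range] at hcard
  omega

/-- A countably infinite causal set Ψ admits a natural labeling by the
negative integers ℤ⁻ if and only if Ψ is future-finite. -/
theorem stmt_1 {Ψ : Type*} [PartialOrder Ψ] [Countable Ψ] [Infinite Ψ]
    (hlocfin : ∀ x y : Ψ, {z : Ψ | x < z ∧ z < y}.Finite) :
    (∃ f : {i : ℤ // i < 0} → Ψ, Function.Bijective f ∧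
        ∀ i j : {i : ℤ // i < 0}, f i < f j → i.1 < j.1) ↔
      (∀ x : Ψ, {y : Ψ | x < y}.Finite) := by
  constructor
  · rintro ⟨f, hfbij, hford⟩ x
    obtain ⟨i, rfl⟩ := hfbij.2 x
    have hsub : {y : Ψ | f i < y} ⊆ f '' (Subtype.val ⁻¹' Set.Ioo i.1 0) := by
      intro y hy
      obtain ⟨j, rfl⟩ := hfbij.2 y
      exact ⟨j, ⟨hford i j hy, j.2⟩, rfl⟩
    apply Set.Finite.subset _ hsub
    exact (((Set.finite_Ioo i.1 0).preimage (Subtype.val_injective.injOn)).image f)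
  · intro hfut
    obtain ⟨g, hgbij, hgord⟩ := aux_enum hfut
    refine ⟨fun i => g (-i.1 - 1).toNat, ⟨?_, ?_⟩, ?_⟩
    · intro i j hij
      have := hgbij.1 hij
      have hi := i.2; have hj := j.2
      exact Subtype.ext (by omega)
    · intro x
      obtain ⟨n, rfl⟩ := hgbij.2 x
      exact ⟨⟨-(n + 1), by omega⟩, by norm_num⟩
    · intro i j h
      have := hgord _ _ h
      have hi := i.2; have hj := j.2
      omega
end

section
/- A countably infinite causal set Ψ admits a natural labeling by ℤ if and only if at least one of the following holds: (i) Ψ is two-way infinite; (ii) Ψ is past-finite and has infinitely many minimal elements; (iii) Ψ is future-finite and has infinitely many maximal elements. -/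
/-!
A labeling by `ℤ` of a past-finite causet has infinitely many minimal elements: every element
lies above a minimal one, so the labels of minimal elements are not bounded below. Dually for
future-finite causets, and otherwise the causet is two-way infinite.

Conversely it suffices to find an infinite up-set `B`, past-finite inside `B`, whose infinite
complement is future-finite inside `Bᶜ`: label `B` by `ℕ` and `Bᶜ` by the negative integers.
A countable, infinite, past-finite poset has a labeling by `ℕ`, because with an injection
`idx` into `ℕ` the map `x ↦ ∑_{y ≤ x} 2 ^ idx y` is injective and strictly monotone.
In case (ii) take for `Bᶜ` an infinite, co-infinite set of minimal elements. In case (i)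
enumerate `Ψ` as `e 0, e 1, …` and let `B` be generated by the elements lying above some `e k`
but below none of `e 0, …, e k`; then `B ∩ Iio (e j) ⊆ ⋃_{k < j} Ioo (e k) (e j)` and
`Bᶜ ∩ Ioi (e k) ⊆ ⋃_{j ≤ k} Ioc (e k) (e j)` are finite by local finiteness.
-/

open Set Function OrderDual

section

variable {α ι κ : Type*}

instance [Countable α] : Countable αᵒᵈ := inferInstanceAs (Countable α)

theorem Set.Infinite.exists_infinite_subset_infinite_diff {s : Set α} (hs : s.Infinite) :
    ∃ t ⊆ s, t.Infinite ∧ (s \ t).Infinite := by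
  let g : ℕ → α := fun n => hs.natEmbedding _ n
  have hg : Injective g := Subtype.val_injective.comp (hs.natEmbedding _).injective
  refine ⟨range fun n => g (2 * n), range_subset_iff.2 fun n => (hs.natEmbedding _ _).2,
    infinite_range_of_injective (hg.comp fun a b h => by simpa using h), ?_⟩
  refine (infinite_range_of_injective (f := fun n => g (2 * n + 1))
    (hg.comp fun a b h => by simpa using h)).mono ?_
  rintro _ ⟨n, rfl⟩
  exact ⟨(hs.natEmbedding _ _).2, fun ⟨m, hm⟩ => by have : 2 * m = 2 * n + 1 := hg hm; omega⟩

section Labeling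

variable [PartialOrder α] [Preorder ι] [Preorder κ]

def IsNaturalLabeling (f : ι → α) : Prop :=
  Bijective f ∧ ∀ i j, f i < f j → i < j

theorem IsNaturalLabeling.dual {f : ι → α} (hf : IsNaturalLabeling f) :
    IsNaturalLabeling (toDual ∘ f ∘ ofDual : ιᵒᵈ → αᵒᵈ) :=
  ⟨toDual.bijective.comp (hf.1.comp ofDual.bijective), fun _ _ hij => hf.2 _ _ hij⟩

theorem IsNaturalLabeling.comp_orderIso {f : ι → α} (hf : IsNaturalLabeling f) (e : κ ≃o ι) :
    IsNaturalLabeling (f ∘ e) :=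
  ⟨hf.1.comp e.bijective, fun _ _ hij => e.lt_iff_lt.1 (hf.2 _ _ hij)⟩

theorem exists_intLabeling_orderDual (h : ∃ f : ℤ → α, IsNaturalLabeling f) :
    ∃ f : ℤ → αᵒᵈ, IsNaturalLabeling f :=
  let ⟨_, hf⟩ := h
  ⟨_, hf.dual.comp_orderIso (OrderIso.neg ℤ)⟩

end Labeling

variable [PartialOrder α]

theorem finite_Iic_of_finite_Iio {a : α} (h : (Iio a).Finite) : (Iic a).Finite :=
  Iio_insert (a := a) ▸ h.insert a

theorem IsNaturalLabeling.le_of_le [LinearOrder ι] {f : ι → α} (hf : IsNaturalLabeling f)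
    {i j : ι} (hij : f i ≤ f j) : i ≤ j :=
  hij.eq_or_lt.elim (fun h => (hf.1.1 h).le) fun h => (hf.2 i j h).le

theorem IsNaturalLabeling.infinite_minimals [LinearOrder ι] [NoMinOrder ι] [Nonempty ι]
    {f : ι → α} (hf : IsNaturalLabeling f) (h : ∀ x : α, (Iio x).Finite) :
    {x : α | ∀ y, ¬ y < x}.Infinite := by
  intro hfin
  obtain ⟨m, hm⟩ := (hfin.preimage hf.1.1.injOn).bddBelow
  obtain ⟨i, hi⟩ := exists_lt m
  obtain ⟨z, hzi, hz⟩ :=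
    (finite_Iic_of_finite_Iio (h (f i))).isPWO.exists_le_minimal (mem_Iic.2 le_rfl)
  obtain ⟨l, rfl⟩ := hf.1.2 z
  have hl : f l ∈ {x : α | ∀ y, ¬ y < x} := fun y hy => hz.not_lt (hy.le.trans hzi) hy
  exact hi.not_ge ((hm hl).trans (hf.le_of_le hzi))

theorem exists_strictMono_injective_nat [Countable α] (h : ∀ x : α, (Iio x).Finite) :
    ∃ k : α → ℕ, StrictMono k ∧ Injective k := by
  obtain ⟨idx, hidx⟩ := exists_injective_nat α
  let code : α → Finset ℕ := fun x => ((finite_Iic_of_finite_Iio (h x)).image idx).toFinset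
  have code_strictMono : StrictMono code := fun x y hxy =>
    Finite.toFinset_ssubset_toFinset.2 (hidx.image_strictMono (Iic_ssubset_Iic.2 hxy))
  have code_injective : Injective code := fun x y hxy =>
    Iic_injective (hidx.image_injective (Finite.toFinset_inj.1 hxy))
  refine ⟨fun x => ∑ i ∈ code x, 2 ^ i, fun x y hxy => ?_,
    (Finset.geomSum_injective le_rfl).comp code_injective⟩
  exact (Finset.geomSum_lt_geomSum_iff_toColex_lt_toColex le_rfl).2
    (Finset.Colex.toColex_lt_toColex_of_ssubset (code_strictMono hxy))

theorem exists_natLabeling_of_strictMono [Infinite α] {k : α → ℕ} (hk : StrictMono k)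
    (hinj : Injective k) : ∃ g : ℕ → α, IsNaturalLabeling g := by
  classical
  have : Infinite (range k) := (infinite_range_of_injective hinj).to_subtype
  let e := Nat.Subtype.orderIsoOfNat (range k)
  let E := Equiv.ofInjective k hinj
  refine ⟨fun n => E.symm (e n), E.symm.bijective.comp e.bijective, fun i j hij => ?_⟩
  have hkij := hk hij
  rw [Equiv.apply_ofInjective_symm hinj, Equiv.apply_ofInjective_symm hinj,
    Subtype.coe_lt_coe] at hkij
  exact e.lt_iff_lt.1 hkij

theorem exists_natLabeling [Countable α] [Infinite α] (h : ∀ x : α, (Iio x).Finite) :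
    ∃ g : ℕ → α, IsNaturalLabeling g :=
  let ⟨_, hk, hinj⟩ := exists_strictMono_injective_nat h
  exists_natLabeling_of_strictMono hk hinj

theorem finite_Iio_coe {s : Set α} (b : s) (h : (s ∩ Iio (b : α)).Finite) : (Iio b).Finite :=
  (h.preimage Subtype.val_injective.injOn).subset fun x hx => ⟨x.2, hx⟩

theorem exists_intLabeling_of_isUpperSet [Countable α] {B : Set α} (hB : IsUpperSet B)
    (hpast : ∀ b ∈ B, (B ∩ Iio b).Finite) (hfut : ∀ a ∈ Bᶜ, (Bᶜ ∩ Ioi a).Finite)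
    (hBinf : B.Infinite) (hBcinf : Bᶜ.Infinite) : ∃ f : ℤ → α, IsNaturalLabeling f := by
  classical
  have : Infinite B := hBinf.to_subtype
  have : Infinite (Bᶜ : Set α)ᵒᵈ := hBcinf.to_subtype
  obtain ⟨gB, hgB⟩ := exists_natLabeling fun b : B => finite_Iio_coe b (hpast b b.2)
  obtain ⟨gA, hgA⟩ := exists_natLabeling fun a : (Bᶜ : Set α)ᵒᵈ =>
    finite_Iio_coe (α := αᵒᵈ) (s := Bᶜ) a (hfut _ (ofDual a).2)
  refine ⟨Equiv.Set.sumCompl B ∘ Sum.map gB (ofDual ∘ gA) ∘ Equiv.intEquivNatSumNat,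
    (Equiv.Set.sumCompl B).bijective.comp
      ((hgB.1.sumMap (ofDual.bijective.comp hgA.1)).comp Equiv.intEquivNatSumNat.bijective),
    ?_⟩
  rintro (i | i) (j | j) hij <;> simp only [Int.ofNat_eq_natCast, comp_apply] at hij
  · exact Int.ofNat_lt.2 (hgB.2 i j hij)
  · exact absurd (hB hij.le (gB i).2) (ofDual (gA j)).2
  · exact Int.negSucc_lt_zero i |>.trans_le (Int.natCast_nonneg j)
  · have := hgA.2 j i hij
    omega

theorem exists_intLabeling_of_infinite_minimals [Countable α] (h : ∀ x : α, (Iio x).Finite)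
    (hmin : {x : α | ∀ y, ¬ y < x}.Infinite) : ∃ f : ℤ → α, IsNaturalLabeling f := by
  obtain ⟨M, hMmin, hM, hMc⟩ := hmin.exists_infinite_subset_infinite_diff
  have hup : IsUpperSet Mᶜ := fun b y hby hb hy =>
    hb (eq_of_le_of_not_lt hby (hMmin hy b) ▸ hy)
  refine exists_intLabeling_of_isUpperSet hup (fun b _ => (h b).subset inter_subset_right)
    (fun a _ => finite_empty.subset fun y ⟨hy, hay⟩ => hMmin (not_not.1 hy) a hay)
    (hMc.mono fun x hx => hx.2) (by rwa [compl_compl])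

def seeds (e : ℕ → α) : Set α := {c | ∃ k, e k < c ∧ ∀ j ≤ k, ¬ c ≤ e j}

theorem finite_upperClosure_seeds_inter_Iio (hloc : ∀ x y : α, (Ioo x y).Finite) (e : ℕ → α)
    (j : ℕ) : ((upperClosure (seeds e) : Set α) ∩ Iio (e j)).Finite := by
  refine ((finite_lt_nat j).biUnion fun k _ => hloc (e k) (e j)).subset ?_
  rintro y ⟨⟨c, ⟨k, hkc, hc⟩, hcy⟩, hy⟩
  have hk : k < j := lt_of_not_ge fun hjk => hc j hjk (hcy.trans hy.le)
  exact mem_biUnion hk ⟨hkc.trans_le hcy, hy⟩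

theorem finite_compl_upperClosure_seeds_inter_Ioi (hloc : ∀ x y : α, (Ioo x y).Finite)
    (e : ℕ → α) (k : ℕ) : ((upperClosure (seeds e) : Set α)ᶜ ∩ Ioi (e k)).Finite := by
  refine ((finite_le_nat k).biUnion fun j _ => (hloc (e k) (e j)).insert (e j)).subset ?_
  rintro y ⟨hyB, hky⟩
  have hy : y ∉ seeds e := fun hy => hyB (subset_upperClosure hy)
  obtain ⟨j, hjk, hyj⟩ : ∃ j ≤ k, y ≤ e j := by
    by_contra! hcon
    exact hy ⟨k, hky, hcon⟩
  exact mem_biUnion hjk (hyj.eq_or_lt.imp id fun h => ⟨hky, h⟩)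

theorem exists_intLabeling_of_twoWayInfinite [Countable α] (hloc : ∀ x y : α, (Ioo x y).Finite)
    (hpast : ¬ ∀ x : α, (Iio x).Finite) (hfut : ¬ ∀ x : α, (Ioi x).Finite) :
    ∃ f : ℤ → α, IsNaturalLabeling f := by
  obtain ⟨a, ha⟩ : ∃ a, (Iio a).Infinite := not_forall.1 hpast
  obtain ⟨c, hc⟩ : ∃ c, (Ioi c).Infinite := not_forall.1 hfut
  have : Nonempty α := ⟨a⟩
  obtain ⟨e, he⟩ := exists_surjective_nat α
  obtain ⟨i, rfl⟩ := he a
  obtain ⟨k, rfl⟩ := he c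
  let B : UpperSet α := upperClosure (seeds e)
  refine exists_intLabeling_of_isUpperSet B.upper ?_ ?_ ?_ ?_
  · intro b _
    obtain ⟨j, rfl⟩ := he b
    exact finite_upperClosure_seeds_inter_Iio hloc e j
  · intro b _
    obtain ⟨j, rfl⟩ := he b
    exact finite_compl_upperClosure_seeds_inter_Ioi hloc e j
  · refine (hc.sdiff (finite_compl_upperClosure_seeds_inter_Ioi hloc e k)).mono ?_
    exact fun y hy => not_not.1 fun hyB => hy.2 ⟨hyB, hy.1⟩
  · refine (ha.sdiff (finite_upperClosure_seeds_inter_Iio hloc e i)).mono ?_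
    exact fun y hy hyB => hy.2 ⟨hyB, hy.1⟩

end

theorem stmt_2_general {Ψ : Type*} [PartialOrder Ψ] [Countable Ψ]
    (hlocfin : ∀ x y : Ψ, {z : Ψ | x < z ∧ z < y}.Finite) :
    (∃ f : ℤ → Ψ, Function.Bijective f ∧ ∀ i j : ℤ, f i < f j → i < j) ↔
      ((¬ (∀ x : Ψ, {y : Ψ | y < x}.Finite) ∧ ¬ (∀ x : Ψ, {y : Ψ | x < y}.Finite)) ∨
       ((∀ x : Ψ, {y : Ψ | y < x}.Finite) ∧ {x : Ψ | ∀ y : Ψ, ¬ y < x}.Infinite) ∨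
       ((∀ x : Ψ, {y : Ψ | x < y}.Finite) ∧ {x : Ψ | ∀ y : Ψ, ¬ x < y}.Infinite)) := by
  constructor
  · rintro ⟨f, hf⟩
    by_cases hpast : ∀ x : Ψ, {y | y < x}.Finite
    · exact Or.inr (Or.inl ⟨hpast, IsNaturalLabeling.infinite_minimals hf hpast⟩)
    by_cases hfut : ∀ x : Ψ, {y | x < y}.Finite
    · obtain ⟨g, hg⟩ := exists_intLabeling_orderDual ⟨f, hf⟩
      exact Or.inr (Or.inr ⟨hfut, hg.infinite_minimals hfut⟩)
    exact Or.inl ⟨hpast, hfut⟩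
  · rintro (⟨hpast, hfut⟩ | ⟨hpast, hmin⟩ | ⟨hfut, hmax⟩)
    · exact exists_intLabeling_of_twoWayInfinite hlocfin hpast hfut
    · exact exists_intLabeling_of_infinite_minimals hpast hmin
    · exact exists_intLabeling_orderDual
        (exists_intLabeling_of_infinite_minimals (α := Ψᵒᵈ) hfut hmax)

/-- A countably infinite causal set Ψ admits a natural labeling by ℤ iff
(i) Ψ is two-way infinite, or (ii) Ψ is past-finite with infinitely many minimal
elements, or (iii) Ψ is future-finite with infinitely many maximal elements. -/
theorem stmt_2 {Ψ : Type*} [PartialOrder Ψ] [Countable Ψ] [Infinite Ψ]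
    (hlocfin : ∀ x y : Ψ, {z : Ψ | x < z ∧ z < y}.Finite) :
    (∃ f : ℤ → Ψ, Function.Bijective f ∧ ∀ i j : ℤ, f i < f j → i < j) ↔
      ((¬ (∀ x : Ψ, {y : Ψ | y < x}.Finite) ∧ ¬ (∀ x : Ψ, {y : Ψ | x < y}.Finite)) ∨
       ((∀ x : Ψ, {y : Ψ | y < x}.Finite) ∧ {x : Ψ | ∀ y : Ψ, ¬ y < x}.Infinite) ∨
       ((∀ x : Ψ, {y : Ψ | x < y}.Finite) ∧ {x : Ψ | ∀ y : Ψ, ¬ x < y}.Infinite)) :=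
  stmt_2_general hlocfin
end

section
/- The set W of two-way infinite labeled causets, W = {D̃ ∈ Ω̃_ℤ : some element of (ℤ, D̃) has infinitely many elements below it and some element has infinitely many elements above it}, belongs to the σ-algebra Σ_cyl generated by the cylinder sets. -/
/-- A labeled causet with ground set ℤ: a strict partial order `r` on ℤ with
`r x y → x < y` (transitivity plus this condition make it a strict order,
automatically locally finite). -/
def OmegaZ : Type :=
  {r : ℤ → ℤ → Prop // Transitive r ∧ ∀ x y : ℤ, r x y → x < y}

/-- The integer intervals `[-n, n]` and `[-n, n+1]`, `n ≥ 0`. -/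
def IsPoscauInterval (I : Set ℤ) : Prop :=
  ∃ n : ℕ, I = Set.Icc (-(n : ℤ)) (n : ℤ) ∨ I = Set.Icc (-(n : ℤ)) ((n : ℤ) + 1)

/-- The cylinder set of a partial order `c` on the interval `I`: those `D ∈ Ω̃_ℤ`
whose restriction to `I` equals `c` and for which `I` is convex in `D`. -/
def cyl (I : Set ℤ) (c : ℤ → ℤ → Prop) : Set OmegaZ :=
  {D | (∀ x ∈ I, ∀ y ∈ I, (D.1 x y ↔ c x y)) ∧
       (∀ x ∈ I, ∀ y ∈ I, ∀ z : ℤ, D.1 x z → D.1 z y → z ∈ I)}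

/-- The collection of all cylinder sets. -/
def cylSets : Set (Set OmegaZ) :=
  {S | ∃ (I : Set ℤ) (c : ℤ → ℤ → Prop), IsPoscauInterval I ∧ Transitive c ∧
    (∀ x y : ℤ, c x y → x ∈ I ∧ y ∈ I ∧ x < y) ∧ S = cyl I c}

/-- The σ-algebra generated by the cylinder sets. -/
def SigmaCyl : MeasurableSpace OmegaZ := MeasurableSpace.generateFrom cylSets

/-- The basic relation event `{D | D.1 a b}` is measurable. -/
lemma measurableSet_rel (a b : ℤ) :
    @MeasurableSet OmegaZ SigmaCyl {D : OmegaZ | D.1 a b} := by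
  classical
  set n : ℕ := a.natAbs ⊔ b.natAbs with hn
  set I : Set ℤ := Set.Icc (-(n : ℤ)) (n : ℤ) with hI
  have haI : a ∈ I := by
    simp only [hI, Set.mem_Icc]
    omega
  have hbI : b ∈ I := by
    simp only [hI, Set.mem_Icc]
    omega
  have hIfin : I.Finite := Set.finite_Icc _ _
  -- Property a good finite relation must satisfy
  let P : Finset (ℤ × ℤ) → Prop := fun s =>
    Transitive (fun x y : ℤ => (x, y) ∈ s) ∧
    (∀ x y : ℤ, (x, y) ∈ s → x ∈ I ∧ y ∈ I ∧ x < y) ∧ (a, b) ∈ s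
  have hEq : {D : OmegaZ | D.1 a b} =
      ⋃ (s : Finset (ℤ × ℤ)) (_ : P s), cyl I (fun x y => (x, y) ∈ s) := by
    ext D
    simp only [Set.mem_setOf_eq, Set.mem_iUnion]
    constructor
    · intro hD
      have hFfin : {p : ℤ × ℤ | p.1 ∈ I ∧ p.2 ∈ I ∧ D.1 p.1 p.2}.Finite := by
        apply Set.Finite.subset (hIfin.prod hIfin)
        rintro ⟨x, y⟩ ⟨h1, h2, _⟩
        exact ⟨h1, h2⟩
      refine ⟨hFfin.toFinset, ?_, ?_⟩
      · refine ⟨?_, ?_, ?_⟩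
        · intro x y z hxy hyz
          rw [Set.Finite.mem_toFinset] at *
          exact ⟨hxy.1, hyz.2.1, D.2.1 hxy.2.2 hyz.2.2⟩
        · intro x y h
          rw [Set.Finite.mem_toFinset] at h
          exact ⟨h.1, h.2.1, D.2.2 _ _ h.2.2⟩
        · rw [Set.Finite.mem_toFinset]
          exact ⟨haI, hbI, hD⟩
      · constructor
        · intro x hx y hy
          simp only [Set.Finite.mem_toFinset, Set.mem_setOf_eq]
          exact ⟨fun h => ⟨hx, hy, h⟩, fun h => h.2.2⟩
        · intro x hx y hy z hxz hzy
          have h1 := D.2.2 _ _ hxz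
          have h2 := D.2.2 _ _ hzy
          simp only [hI, Set.mem_Icc] at *
          omega
    · rintro ⟨s, hP, hmem⟩
      exact (hmem.1 a haI b hbI).2 hP.2.2
  rw [hEq]
  refine MeasurableSet.iUnion fun s => MeasurableSet.iUnion fun hP => ?_
  exact MeasurableSpace.measurableSet_generateFrom
    ⟨I, fun x y => (x, y) ∈ s, ⟨n, Or.inl rfl⟩, hP.1, hP.2.1, rfl⟩

lemma past_inf_eq (x : ℤ) :
    {D : OmegaZ | {y : ℤ | D.1 y x}.Infinite} =
      ⋂ (m : ℤ), ⋃ (y : ℤ) (_ : y ≤ m), {D : OmegaZ | D.1 y x} := by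
  ext D
  simp only [Set.mem_setOf_eq, Set.mem_iInter, Set.mem_iUnion]
  constructor
  · intro hInf m
    by_contra h
    push_neg at h
    refine hInf (Set.Finite.subset (Set.finite_Ioo m x) fun y hy => ?_)
    have hyx := D.2.2 _ _ hy
    have : ¬ y ≤ m := fun hle => h y hle hy
    exact ⟨by omega, hyx⟩
  · intro h hFin
    obtain ⟨m, hm⟩ := hFin.bddBelow
    obtain ⟨y, hy1, hy2⟩ := h (m - 1)
    have := hm hy2
    omega

lemma fut_inf_eq (x : ℤ) :
    {D : OmegaZ | {y : ℤ | D.1 x y}.Infinite} =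
      ⋂ (m : ℤ), ⋃ (y : ℤ) (_ : m ≤ y), {D : OmegaZ | D.1 x y} := by
  ext D
  simp only [Set.mem_setOf_eq, Set.mem_iInter, Set.mem_iUnion]
  constructor
  · intro hInf m
    by_contra h
    push_neg at h
    refine hInf (Set.Finite.subset (Set.finite_Ioo x m) fun y hy => ?_)
    have hxy := D.2.2 _ _ hy
    have : ¬ m ≤ y := fun hle => h y hle hy
    exact ⟨hxy, by omega⟩
  · intro h hFin
    obtain ⟨m, hm⟩ := hFin.bddAbove
    obtain ⟨y, hy1, hy2⟩ := h (m + 1)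
    have := hm hy2
    omega

/-- The set W of two-way infinite labeled causets belongs to the
σ-algebra generated by the cylinder sets. -/
theorem stmt_3 :
    @MeasurableSet OmegaZ SigmaCyl
      {D : OmegaZ | (∃ x : ℤ, {y : ℤ | D.1 y x}.Infinite) ∧
                    (∃ x : ℤ, {y : ℤ | D.1 x y}.Infinite)} := by
  have hset : {D : OmegaZ | (∃ x : ℤ, {y : ℤ | D.1 y x}.Infinite) ∧
                    (∃ x : ℤ, {y : ℤ | D.1 x y}.Infinite)} =
      (⋃ (x : ℤ), {D : OmegaZ | {y : ℤ | D.1 y x}.Infinite}) ∩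
      (⋃ (x : ℤ), {D : OmegaZ | {y : ℤ | D.1 x y}.Infinite}) := by
    ext D
    simp [Set.mem_iUnion]
  rw [hset]
  refine MeasurableSet.inter ?_ ?_
  · refine MeasurableSet.iUnion fun x => ?_
    rw [past_inf_eq]
    exact MeasurableSet.iInter fun m => MeasurableSet.iUnion fun y =>
      MeasurableSet.iUnion fun _ => measurableSet_rel y x
  · refine MeasurableSet.iUnion fun x => ?_
    rw [fut_inf_eq]
    exact MeasurableSet.iInter fun m => MeasurableSet.iUnion fun y =>
      MeasurableSet.iUnion fun _ => measurableSet_rel x y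
end

section
/- For every finite poset P, the convex-event convex(P) = {D̃ ∈ Ω̃_ℤ : there exists a finite convex subset S ⊆ ℤ of (ℤ, D̃) whose induced order is order-isomorphic to P} belongs to the σ-algebra Σ_cyl generated by the cylinder sets. -/
/-- For every finite poset P, the convex-event convex(P) — the set of
labeled causets on ℤ containing a finite convex subset whose induced order is
order-isomorphic to P — belongs to the σ-algebra generated by the cylinder sets. -/
theorem stmt_5 (P : Type*) [Fintype P] [PartialOrder P] :
    @MeasurableSet OmegaZ SigmaCyl
      {D : OmegaZ | ∃ S : Set ℤ, S.Finite ∧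
        (∀ x ∈ S, ∀ y ∈ S, ∀ z : ℤ, D.1 x z → D.1 z y → z ∈ S) ∧
        ∃ g : S ≃ P, ∀ a b : S, D.1 a.1 b.1 ↔ g a < g b} := by
  classical
  have key : {D : OmegaZ | ∃ S : Set ℤ, S.Finite ∧
        (∀ x ∈ S, ∀ y ∈ S, ∀ z : ℤ, D.1 x z → D.1 z y → z ∈ S) ∧
        ∃ g : S ≃ P, ∀ a b : S, D.1 a.1 b.1 ↔ g a < g b}
      = ⋃ (n : ℕ), ⋃ (F : Finset (ℤ × ℤ)),
        ⋃ (_ : Transitive (fun x y : ℤ => (x, y) ∈ F) ∧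
          (∀ x y : ℤ, (x, y) ∈ F →
            x ∈ Set.Icc (-(n : ℤ)) (n : ℤ) ∧ y ∈ Set.Icc (-(n : ℤ)) (n : ℤ) ∧ x < y) ∧
          ∃ S : Set ℤ, S.Finite ∧ S ⊆ Set.Icc (-(n : ℤ)) (n : ℤ) ∧
            (∀ x ∈ S, ∀ y ∈ S, ∀ z : ℤ, (x, z) ∈ F → (z, y) ∈ F → z ∈ S) ∧
            ∃ g : S ≃ P, ∀ a b : S, ((a.1, b.1) ∈ F) ↔ g a < g b),
        cyl (Set.Icc (-(n : ℤ)) (n : ℤ)) (fun x y : ℤ => (x, y) ∈ F) := by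
    ext D
    simp only [Set.mem_setOf_eq, Set.mem_iUnion]
    constructor
    · rintro ⟨S, hSfin, hSconv, g, hg⟩
      obtain ⟨n, hn⟩ : ∃ n : ℕ, ∀ x ∈ S, x ∈ Set.Icc (-(n : ℤ)) (n : ℤ) := by
        refine ⟨hSfin.toFinset.sup Int.natAbs, fun x hx => ?_⟩
        have hle : x.natAbs ≤ hSfin.toFinset.sup Int.natAbs :=
          Finset.le_sup (hSfin.mem_toFinset.mpr hx)
        rw [Set.mem_Icc]
        omega
      set F : Finset (ℤ × ℤ) :=
        (Finset.Icc (-(n : ℤ)) (n : ℤ) ×ˢ Finset.Icc (-(n : ℤ)) (n : ℤ)).filter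
          (fun p => D.1 p.1 p.2) with hFdef
      have hF : ∀ x y : ℤ, (x, y) ∈ F ↔
          (x ∈ Set.Icc (-(n : ℤ)) (n : ℤ) ∧ y ∈ Set.Icc (-(n : ℤ)) (n : ℤ) ∧ D.1 x y) := by
        intro x y
        simp [hFdef, Finset.mem_filter, Finset.mem_product, Finset.mem_Icc, Set.mem_Icc,
          and_assoc]
      refine ⟨n, F, ⟨?_, ?_, S, hSfin, hn, ?_, g, ?_⟩, ?_, ?_⟩
      · intro x y z hxy hyz
        rw [hF] at hxy hyz ⊢
        exact ⟨hxy.1, hyz.2.1, D.2.1 hxy.2.2 hyz.2.2⟩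
      · intro x y hxy
        rw [hF] at hxy
        exact ⟨hxy.1, hxy.2.1, D.2.2 x y hxy.2.2⟩
      · intro x hx y hy z hxz hzy
        rw [hF] at hxz hzy
        exact hSconv x hx y hy z hxz.2.2 hzy.2.2
      · intro a b
        rw [hF]
        constructor
        · intro h; exact (hg a b).mp h.2.2
        · intro h; exact ⟨hn a.1 a.2, hn b.1 b.2, (hg a b).mpr h⟩
      · intro x hx y hy
        simp only [hF]
        simp only [Set.mem_Icc] at hx hy
        constructor
        · intro h; exact ⟨Set.mem_Icc.mpr hx, Set.mem_Icc.mpr hy, h⟩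
        · intro h; exact h.2.2
      · intro x hx y hy z hxz hzy
        have h1 := D.2.2 x z hxz
        have h2 := D.2.2 z y hzy
        simp only [Set.mem_Icc] at *
        omega
    · rintro ⟨n, F, ⟨-, -, S, hSfin, hSI, hSconv, g, hg⟩, hrestr, -⟩
      refine ⟨S, hSfin, ?_, g, ?_⟩
      · intro x hx y hy z hxz hzy
        have h1 := D.2.2 x z hxz
        have h2 := D.2.2 z y hzy
        have hxI := hSI hx
        have hyI := hSI hy
        have hzI : z ∈ Set.Icc (-(n : ℤ)) (n : ℤ) := by
          simp only [Set.mem_Icc] at *; omega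
        have hFxz : (x, z) ∈ F := (hrestr x hxI z hzI).mp hxz
        have hFzy : (z, y) ∈ F := (hrestr z hzI y hyI).mp hzy
        exact hSconv x hx y hy z hFxz hFzy
      · intro a b
        rw [hrestr a.1 (hSI a.2) b.1 (hSI b.2)]
        exact hg a b
  rw [key]
  refine MeasurableSet.iUnion fun n => MeasurableSet.iUnion fun F =>
    MeasurableSet.iUnion fun h => ?_
  exact MeasurableSpace.measurableSet_generateFrom
    ⟨Set.Icc (-(n : ℤ)) (n : ℤ), fun x y : ℤ => (x, y) ∈ F, ⟨n, Or.inl rfl⟩, h.1, h.2.1, rfl⟩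
end

section
/- An Alternating CSG model satisfies Discrete General Covariance if and only if it is an Alternating Transitive Percolation model: given couplings t_0 > 0 and t_k ≥ 0 (k ≥ 1), the node probabilities satisfy P(C̃) = P(C̃′) for every pair of order-isomorphic nodes C̃ ≅ C̃′ of alternating poscau if and only if t_n · t_0^{n−1} = t_1^n for all n ≥ 1. -/
/-- The element born at stage `k` in alternating growth: `k/2` if `k` is even,
`-(k+1)/2` if `k` is odd (birth order `0, -1, 1, -2, 2, …`). -/
def born (k : ℕ) : ℤ := if Even k then ((k / 2 : ℕ) : ℤ) else -(((k + 1) / 2 : ℕ) : ℤ)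

/-- The ground set of the partial causet after `N` stages: the elements born at
stages `0, 1, …, N-1`. -/
def ground (N : ℕ) : Set ℤ := born '' {k : ℕ | k < N}

/-- A node of alternating poscau of cardinality `N`: a strict partial order
supported on `ground N` with `x ≺ y → x < y`. -/
def IsNode (N : ℕ) (c : ℤ → ℤ → Prop) : Prop :=
  Transitive c ∧ ∀ x y : ℤ, c x y → x ∈ ground N ∧ y ∈ ground N ∧ x < y

/-- `lam t k p = λ(k,p) = Σ_{i=0}^{k-p} C(k-p, i) t_{p+i}`. -/
noncomputable def lam (t : ℕ → ℝ) (k p : ℕ) : ℝ :=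
  ∑ i ∈ Finset.range (k - p + 1), ((k - p).choose i : ℝ) * t (p + i)

/-- `ϖ_n`: the number of elements of the stage-`n` partial causet comparable (in the
stage-`(n+1)` partial causet) to the element born at stage `n`. -/
noncomputable def varpi (c : ℤ → ℤ → Prop) (n : ℕ) : ℕ :=
  {x : ℤ | x ∈ ground n ∧ (c x (born n) ∨ c (born n) x)}.ncard

/-- `x` is linked to `y` in the restriction of `c` to `ground (n+1)`:
`c x y` holds with no intermediate element in `ground (n+1)`. -/
def IsLinkIn (c : ℤ → ℤ → Prop) (n : ℕ) (x y : ℤ) : Prop :=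
  c x y ∧ ¬ ∃ z ∈ ground (n + 1), c x z ∧ c z y

/-- `m_n`: the number of elements of the stage-`n` partial causet related to the
newborn by a link (covering relation) of the stage-`(n+1)` partial causet. -/
noncomputable def links (c : ℤ → ℤ → Prop) (n : ℕ) : ℕ :=
  {x : ℤ | x ∈ ground n ∧ (IsLinkIn c n x (born n) ∨ IsLinkIn c n (born n) x)}.ncard

/-- The probability of reaching the node `c` of cardinality `N` in the Alternating CSG
model with couplings `t`: `P(c) = Π_{n=1}^{N-1} λ(ϖ_n, m_n)/λ(n, 0)`. -/
noncomputable def nodeProb (t : ℕ → ℝ) (N : ℕ) (c : ℤ → ℤ → Prop) : ℝ :=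
  ∏ n ∈ Finset.Ico 1 N, lam t (varpi c n) (links c n) / lam t n 0

/-- Two nodes of cardinality `N` are order-isomorphic. -/
def NodeIso (N : ℕ) (c c' : ℤ → ℤ → Prop) : Prop :=
  ∃ g : ℤ → ℤ, Set.BijOn g (ground N) (ground N) ∧
    ∀ x ∈ ground N, ∀ y ∈ ground N, (c x y ↔ c' (g x) (g y))



namespace S6


lemma born_two_mul (k : ℕ) :
    (k % 2 = 0 ∧ 2 * born k = (k : ℤ)) ∨ (k % 2 = 1 ∧ 2 * born k = -((k : ℤ) + 1)) := by
  unfold born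
  rcases Nat.even_or_odd k with h | h
  · left
    rw [if_pos h]
    obtain ⟨m, rfl⟩ := h
    constructor
    · omega
    · have : (m + m) / 2 = m := by omega
      rw [this]; push_cast; ring
  · right
    rw [if_neg (Nat.not_even_iff_odd.2 h)]
    obtain ⟨m, rfl⟩ := h
    constructor
    · omega
    · have : (2 * m + 1 + 1) / 2 = m + 1 := by omega
      rw [this]; push_cast; ring

lemma born_inj : Function.Injective born := by
  intro j k h
  rcases born_two_mul j with ⟨h1, h2⟩ | ⟨h1, h2⟩ <;>
    rcases born_two_mul k with ⟨h3, h4⟩ | ⟨h3, h4⟩ <;>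
    rw [h] at h2 <;> omega

lemma mem_ground_iff {M : ℕ} {z : ℤ} :
    z ∈ ground M ↔ (0 ≤ z ∧ 2 * z < (M : ℤ)) ∨ (z < 0 ∧ -(2 * z) ≤ (M : ℤ)) := by
  constructor
  · rintro ⟨k, hk, rfl⟩
    simp only [Set.mem_setOf_eq] at hk
    rcases born_two_mul k with ⟨h1, h2⟩ | ⟨h1, h2⟩ <;> omega
  · rintro (⟨h1, h2⟩ | ⟨h1, h2⟩)
    · refine ⟨2 * z.toNat, ?_, ?_⟩
      · simp only [Set.mem_setOf_eq]; omega
      · rcases born_two_mul (2 * z.toNat) with ⟨g1, g2⟩ | ⟨g1, g2⟩ <;> omega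
    · refine ⟨2 * (-z - 1).toNat + 1, ?_, ?_⟩
      · simp only [Set.mem_setOf_eq]; omega
      · rcases born_two_mul (2 * (-z - 1).toNat + 1) with ⟨g1, g2⟩ | ⟨g1, g2⟩ <;> omega

lemma ground_mono {M N : ℕ} (h : M ≤ N) : ground M ⊆ ground N := by
  rintro z ⟨k, hk, rfl⟩
  exact ⟨k, by simp only [Set.mem_setOf_eq] at *; omega, rfl⟩

lemma born_mem_ground_iff {k M : ℕ} : born k ∈ ground M ↔ k < M := by
  constructor
  · rintro ⟨j, hj, h⟩
    have := born_inj h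
    simp only [Set.mem_setOf_eq] at hj; omega
  · intro h; exact ⟨k, h, rfl⟩

lemma ground_finite (M : ℕ) : (ground M).Finite :=
  Set.Finite.image _ (Set.finite_Iio M)

lemma ncard_ground (M : ℕ) : (ground M).ncard = M := by
  have h1 : ground M = born '' (Set.Iio M) := rfl
  rw [h1, Set.ncard_image_of_injective _ born_inj]
  have : (Set.Iio M) = ((Finset.Iio M : Finset ℕ) : Set ℕ) := by simp
  rw [this, Set.ncard_coe_finset, Nat.card_Iio]

lemma ground_succ (M : ℕ) : ground (M + 1) = insert (born M) (ground M) := by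
  ext z
  constructor
  · rintro ⟨k, hk, rfl⟩
    simp only [Set.mem_setOf_eq] at hk
    rcases Nat.lt_succ_iff_lt_or_eq.1 hk with h | rfl
    · exact Set.mem_insert_of_mem _ ⟨k, h, rfl⟩
    · exact Set.mem_insert _ _
  · rintro (rfl | hz)
    · exact born_mem_ground_iff.2 (Nat.lt_succ_self M)
    · exact ground_mono (Nat.le_succ M) hz

lemma ground_interval {M : ℕ} {x y z : ℤ} (hx : x ∈ ground M) (hy : y ∈ ground M)
    (h1 : x < z) (h2 : z < y) : z ∈ ground M := by
  rw [mem_ground_iff] at hx hy ⊢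
  omega

/-- If `k` is odd, `born k` is below everything in `ground k`. -/
lemma born_lt_of_odd {k : ℕ} (hk : k % 2 = 1) {w : ℤ} (hw : w ∈ ground k) : born k < w := by
  rw [mem_ground_iff] at hw
  rcases born_two_mul k with ⟨h1, h2⟩ | ⟨h1, h2⟩ <;> omega

/-- If `k` is even, `born k` is above everything in `ground k`. -/
lemma lt_born_of_even {k : ℕ} (hk : k % 2 = 0) {w : ℤ} (hw : w ∈ ground k) : w < born k := by
  rw [mem_ground_iff] at hw
  rcases born_two_mul k with ⟨h1, h2⟩ | ⟨h1, h2⟩ <;> omega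



/-- Pairs of related elements inside `ground M`. -/
def pairsIn (r : ℤ → ℤ → Prop) (M : ℕ) : Set (ℤ × ℤ) :=
  {p : ℤ × ℤ | p.1 ∈ ground M ∧ p.2 ∈ ground M ∧ r p.1 p.2}

lemma pairsIn_finite (r : ℤ → ℤ → Prop) (M : ℕ) : (pairsIn r M).Finite := by
  apply Set.Finite.subset ((ground_finite M).prod (ground_finite M))
  rintro ⟨x, y⟩ ⟨hx, hy, _⟩
  exact ⟨hx, hy⟩

lemma stageSet_finite (r : ℤ → ℤ → Prop) (k : ℕ) :
    {x : ℤ | x ∈ ground k ∧ (r x (born k) ∨ r (born k) x)}.Finite :=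
  Set.Finite.subset (ground_finite k) (fun x hx => hx.1)

lemma stage_sum (r : ℤ → ℤ → Prop) (hr : ∀ x y, r x y → x < y) (M : ℕ) :
    ∑ k ∈ Finset.Ico 1 M, {x : ℤ | x ∈ ground k ∧ (r x (born k) ∨ r (born k) x)}.ncard
      = (pairsIn r M).ncard := by
  classical
  induction M with
  | zero =>
    have : pairsIn r 0 = ∅ := by
      ext p; simp only [pairsIn, Set.mem_setOf_eq, Set.mem_empty_iff_false, iff_false]
      rintro ⟨⟨k, hk, _⟩, _⟩; simp at hk
    simp [this]
  | succ M ih =>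
    have hzero : {x : ℤ | x ∈ ground 0 ∧ (r x (born 0) ∨ r (born 0) x)}.ncard = 0 := by
      have : {x : ℤ | x ∈ ground 0 ∧ (r x (born 0) ∨ r (born 0) x)} = ∅ := by
        ext x
        simp only [Set.mem_setOf_eq, Set.mem_empty_iff_false, iff_false, not_and]
        rintro ⟨k, hk, _⟩
        simp at hk
      simp [this]
    have hstep : ∑ k ∈ Finset.Ico 1 (M + 1),
        {x : ℤ | x ∈ ground k ∧ (r x (born k) ∨ r (born k) x)}.ncard
        = (∑ k ∈ Finset.Ico 1 M,
            {x : ℤ | x ∈ ground k ∧ (r x (born k) ∨ r (born k) x)}.ncard)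
          + {x : ℤ | x ∈ ground M ∧ (r x (born M) ∨ r (born M) x)}.ncard := by
      rcases Nat.eq_zero_or_pos M with rfl | hM
      · simpa using hzero.symm
      · exact Finset.sum_Ico_succ_top hM _
    rw [hstep, ih]
    have hbng : born M ∉ ground M := by rw [born_mem_ground_iff]; omega
    set S := {x : ℤ | x ∈ ground M ∧ (r x (born M) ∨ r (born M) x)} with hS
    set F : ℤ → ℤ × ℤ := fun x => if r x (born M) then (x, born M) else (born M, x) with hF
    have hinj : Set.InjOn F S := by
      intro u hu v hv huv
      by_cases h1 : r u (born M) <;> by_cases h2 : r v (born M)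
      · have e1 : F u = (u, born M) := by simp only [hF, if_pos h1]
        have e2 : F v = (v, born M) := by simp only [hF, if_pos h2]
        rw [e1, e2, Prod.mk.injEq] at huv; exact huv.1
      · have e1 : F u = (u, born M) := by simp only [hF, if_pos h1]
        have e2 : F v = (born M, v) := by simp only [hF, if_neg h2]
        rw [e1, e2, Prod.mk.injEq] at huv
        exact absurd (huv.1 ▸ hu.1) hbng
      · have e1 : F u = (born M, u) := by simp only [hF, if_neg h1]
        have e2 : F v = (v, born M) := by simp only [hF, if_pos h2]
        rw [e1, e2, Prod.mk.injEq] at huv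
        exact absurd (huv.1.symm ▸ hv.1) hbng
      · have e1 : F u = (born M, u) := by simp only [hF, if_neg h1]
        have e2 : F v = (born M, v) := by simp only [hF, if_neg h2]
        rw [e1, e2, Prod.mk.injEq] at huv; exact huv.2
    have hsplit : pairsIn r (M + 1) = pairsIn r M ∪ F '' S := by
      ext ⟨x, y⟩
      simp only [pairsIn, Set.mem_setOf_eq, Set.mem_union, ground_succ, Set.mem_insert_iff]
      constructor
      · rintro ⟨hx, hy, hxy⟩
        rcases hx with rfl | hx
        · rcases hy with rfl | hy
          · exact absurd (hr _ _ hxy) (lt_irrefl _)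
          · right
            refine ⟨y, ⟨hy, Or.inr hxy⟩, ?_⟩
            have hnyb : ¬ r y (born M) :=
              fun h => absurd ((hr _ _ h).trans (hr _ _ hxy)) (lt_irrefl _)
            simp only [hF, if_neg hnyb]
        · rcases hy with rfl | hy
          · right
            refine ⟨x, ⟨hx, Or.inl hxy⟩, ?_⟩
            simp only [hF, if_pos hxy]
          · exact Or.inl ⟨hx, hy, hxy⟩
      · rintro (⟨hx, hy, hxy⟩ | ⟨z, hzS, hzeq⟩)
        · exact ⟨Or.inr hx, Or.inr hy, hxy⟩
        · obtain ⟨hzg, hzr⟩ := hzS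
          have hzx : (F z).1 = x := by rw [hzeq]
          have hzy : (F z).2 = y := by rw [hzeq]
          by_cases h : r z (born M)
          · have hFz : F z = (z, born M) := by simp only [hF, if_pos h]
            have ex : x = z := by rw [← hzx, hFz]
            have ey : y = born M := by rw [← hzy, hFz]
            subst ex; subst ey
            exact ⟨Or.inr hzg, Or.inl rfl, h⟩
          · have hFz : F z = (born M, z) := by simp only [hF, if_neg h]
            have ex : x = born M := by rw [← hzx, hFz]
            have ey : y = z := by rw [← hzy, hFz]
            subst ex; subst ey
            rcases hzr with h' | h'
            · exact absurd h' h
            · exact ⟨Or.inl rfl, Or.inr hzg, h'⟩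
    have hdisj : Disjoint (pairsIn r M) (F '' S) := by
      rw [Set.disjoint_left]
      rintro ⟨x, y⟩ ⟨hx, hy, _⟩ ⟨z, _, hzeq⟩
      have hzx : (F z).1 = x := by rw [hzeq]
      have hzy : (F z).2 = y := by rw [hzeq]
      by_cases h : r z (born M)
      · have hFz : F z = (z, born M) := by simp only [hF, if_pos h]
        have ey : y = born M := by rw [← hzy, hFz]
        exact hbng (ey ▸ hy)
      · have hFz : F z = (born M, z) := by simp only [hF, if_neg h]
        have ex : x = born M := by rw [← hzx, hFz]
        exact hbng (ex ▸ hx)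
    rw [hsplit, Set.ncard_union_eq hdisj (pairsIn_finite r M)
      (Set.Finite.image _ (stageSet_finite r M)), Set.ncard_image_of_injOn hinj]



/-- An absolute (stage-independent) notion of link. -/
def Link (c : ℤ → ℤ → Prop) (x y : ℤ) : Prop := c x y ∧ ∀ z, ¬ (c x z ∧ c z y)

lemma link_lt {N : ℕ} {c : ℤ → ℤ → Prop} (hc : IsNode N c) {x y : ℤ} (h : Link c x y) :
    x < y := (hc.2 _ _ h.1).2.2

lemma isLinkIn_iff {N : ℕ} {c : ℤ → ℤ → Prop} (hc : IsNode N c) {k : ℕ} {x y : ℤ}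
    (hx : x ∈ ground (k + 1)) (hy : y ∈ ground (k + 1)) :
    IsLinkIn c k x y ↔ Link c x y := by
  constructor
  · rintro ⟨hcxy, hno⟩
    refine ⟨hcxy, fun z hz => hno ⟨z, ?_, hz⟩⟩
    exact ground_interval hx hy (hc.2 _ _ hz.1).2.2 (hc.2 _ _ hz.2).2.2
  · rintro ⟨hcxy, hno⟩
    exact ⟨hcxy, fun ⟨z, _, hz⟩ => hno z hz⟩

lemma links_eq_linkStage {N : ℕ} {c : ℤ → ℤ → Prop} (hc : IsNode N c) (k : ℕ) :
    links c k = {x : ℤ | x ∈ ground k ∧ (Link c x (born k) ∨ Link c (born k) x)}.ncard := by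
  unfold links
  congr 1
  ext x
  simp only [Set.mem_setOf_eq, and_congr_right_iff]
  intro hx
  have hx1 : x ∈ ground (k + 1) := ground_mono (by omega) hx
  have hb1 : born k ∈ ground (k + 1) := born_mem_ground_iff.2 (by omega)
  rw [isLinkIn_iff hc hx1 hb1, isLinkIn_iff hc hb1 hx1]

lemma varpiSet_finite (c : ℤ → ℤ → Prop) (k : ℕ) :
    {x : ℤ | x ∈ ground k ∧ (c x (born k) ∨ c (born k) x)}.Finite :=
  Set.Finite.subset (ground_finite k) (fun x hx => hx.1)

lemma links_le_varpi (c : ℤ → ℤ → Prop) (k : ℕ) : links c k ≤ varpi c k := by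
  apply Set.ncard_le_ncard _ (varpiSet_finite c k)
  rintro x ⟨hx, h | h⟩
  · exact ⟨hx, Or.inl h.1⟩
  · exact ⟨hx, Or.inr h.1⟩

/-- Total numbers of relations and links are preserved by isomorphisms. -/
lemma pairs_ncard_eq {N : ℕ} {c c' : ℤ → ℤ → Prop} (hc : IsNode N c) (hc' : IsNode N c')
    (g : ℤ → ℤ) (hg : Set.BijOn g (ground N) (ground N))
    (hiff : ∀ x ∈ ground N, ∀ y ∈ ground N, (c x y ↔ c' (g x) (g y))) :
    (pairsIn c N).ncard = (pairsIn c' N).ncard ∧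
      (pairsIn (Link c) N).ncard = (pairsIn (Link c') N).ncard := by
  have himg : ∀ (d d' : ℤ → ℤ → Prop),
      (∀ x ∈ ground N, ∀ y ∈ ground N, (d x y → d' (g x) (g y))) →
      (∀ x ∈ ground N, ∀ y ∈ ground N, (d' (g x) (g y) → d x y)) →
      (Prod.map g g) '' (pairsIn d N) = pairsIn d' N := by
    intro d d' hfwd hbwd
    ext ⟨x, y⟩
    constructor
    · rintro ⟨⟨a, b⟩, ⟨ha, hb, hab⟩, heq⟩
      obtain ⟨e1, e2⟩ := Prod.ext_iff.1 heq
      simp only [Prod.map_apply] at e1 e2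
      subst e1; subst e2
      exact ⟨hg.mapsTo ha, hg.mapsTo hb, hfwd _ ha _ hb hab⟩
    · rintro ⟨hx, hy, hxy⟩
      obtain ⟨a, ha, rfl⟩ := hg.surjOn hx
      obtain ⟨b, hb, rfl⟩ := hg.surjOn hy
      exact ⟨(a, b), ⟨ha, hb, hbwd _ ha _ hb hxy⟩, rfl⟩
  have hinj : Set.InjOn (Prod.map g g) (Set.prod (ground N) (ground N)) := by
    rintro ⟨a, b⟩ ⟨ha, hb⟩ ⟨a', b'⟩ ⟨ha', hb'⟩ heq
    obtain ⟨e1, e2⟩ := Prod.ext_iff.1 heq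
    simp only [Prod.map_apply] at e1 e2
    exact Prod.ext (hg.injOn ha ha' e1) (hg.injOn hb hb' e2)
  have hinj' : ∀ d : ℤ → ℤ → Prop, Set.InjOn (Prod.map g g) (pairsIn d N) := by
    intro d
    apply hinj.mono
    intro p hp
    exact ⟨hp.1, hp.2.1⟩
  constructor
  · rw [← himg c c' (fun x hx y hy h => (hiff x hx y hy).1 h)
      (fun x hx y hy h => (hiff x hx y hy).2 h), Set.ncard_image_of_injOn (hinj' c)]
  · have hfwd : ∀ x ∈ ground N, ∀ y ∈ ground N, (Link c x y → Link c' (g x) (g y)) := by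
      rintro x hx y hy ⟨hxy, hno⟩
      refine ⟨(hiff x hx y hy).1 hxy, fun z ⟨h1, h2⟩ => ?_⟩
      have hz : z ∈ ground N := (hc'.2 _ _ h1).2.1
      obtain ⟨w, hw, rfl⟩ := hg.surjOn hz
      exact hno w ⟨(hiff x hx w hw).2 h1, (hiff w hw y hy).2 h2⟩
    have hbwd : ∀ x ∈ ground N, ∀ y ∈ ground N, (Link c' (g x) (g y) → Link c x y) := by
      rintro x hx y hy ⟨hxy, hno⟩
      refine ⟨(hiff x hx y hy).2 hxy, fun z ⟨h1, h2⟩ => ?_⟩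
      have hz : z ∈ ground N := (hc.2 _ _ h1).2.1
      exact hno (g z) ⟨(hiff x hx z hz).1 h1, (hiff z hz y hy).1 h2⟩
    rw [← himg (Link c) (Link c') hfwd hbwd, Set.ncard_image_of_injOn (hinj' (Link c))]

lemma lam_tp (t : ℕ → ℝ) (r : ℝ) (htm : ∀ k, t k = t 0 * r ^ k) (k p : ℕ) :
    lam t k p = t 0 * r ^ p * (1 + r) ^ (k - p) := by
  unfold lam
  have hcongr : ∀ i ∈ Finset.range (k - p + 1), ((k - p).choose i : ℝ) * t (p + i)
      = t 0 * r ^ p * (r ^ i * 1 ^ ((k - p) - i) * ((k - p).choose i : ℝ)) := by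
    intro i hi
    rw [htm (p + i), pow_add]
    ring
  rw [Finset.sum_congr rfl hcongr, ← Finset.mul_sum, ← add_pow, add_comm r 1]

lemma nodeProb_tp (t : ℕ → ℝ) (ht0 : t 0 ≠ 0) (r : ℝ) (hr : 0 ≤ r)
    (htm : ∀ k, t k = t 0 * r ^ k) (N : ℕ) (c : ℤ → ℤ → Prop) :
    nodeProb t N c = r ^ (∑ k ∈ Finset.Ico 1 N, links c k)
      * (1 + r) ^ ((∑ k ∈ Finset.Ico 1 N, varpi c k) - (∑ k ∈ Finset.Ico 1 N, links c k))
      * (∏ k ∈ Finset.Ico 1 N, ((1 + r) ^ k))⁻¹ := by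
  have h1r : (0:ℝ) < 1 + r := by linarith
  unfold nodeProb
  have hcongr : ∀ k ∈ Finset.Ico 1 N, lam t (varpi c k) (links c k) / lam t k 0
      = r ^ links c k * (1 + r) ^ (varpi c k - links c k) * ((1 + r) ^ k)⁻¹ := by
    intro k _
    rw [lam_tp t r htm, lam_tp t r htm, pow_zero, Nat.sub_zero]
    rw [mul_one, div_eq_iff (by positivity)]
    field_simp
  rw [Finset.prod_congr rfl hcongr, Finset.prod_mul_distrib, Finset.prod_mul_distrib,
    Finset.prod_pow_eq_pow_sum, Finset.prod_pow_eq_pow_sum, ← Finset.prod_inv_distrib,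
    Finset.sum_tsub_distrib _ (fun k _ => links_le_varpi c k)]


lemma backward (t : ℕ → ℝ) (ht0 : 0 < t 0) (ht1 : 0 ≤ t 1)
    (hTP : ∀ n : ℕ, 1 ≤ n → t n * t 0 ^ (n - 1) = t 1 ^ n) :
    ∀ N : ℕ, 1 ≤ N → ∀ c c' : ℤ → ℤ → Prop, IsNode N c → IsNode N c' →
      NodeIso N c c' → nodeProb t N c = nodeProb t N c' := by
  rintro N hN c c' hc hc' ⟨g, hg, hiff⟩
  set r := t 1 / t 0 with hrdef
  have hr : 0 ≤ r := div_nonneg ht1 ht0.le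
  have htm : ∀ k, t k = t 0 * r ^ k := by
    intro k
    rcases Nat.eq_zero_or_pos k with rfl | hk
    · simp
    · have h := hTP k hk
      obtain ⟨i, rfl⟩ : ∃ i, k = i + 1 := ⟨k - 1, by omega⟩
      simp only [Nat.add_sub_cancel] at h
      have hpow : t 0 ^ i ≠ 0 := pow_ne_zero _ (ne_of_gt ht0)
      have key : t (i + 1) = t 1 ^ (i + 1) / t 0 ^ i := (eq_div_iff hpow).2 h
      rw [key, hrdef, div_pow]
      field_simp
      ring
  have hsums := pairs_ncard_eq hc hc' g hg hiff
  have hv : ∑ k ∈ Finset.Ico 1 N, varpi c k = ∑ k ∈ Finset.Ico 1 N, varpi c' k := by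
    unfold varpi
    rw [stage_sum c (fun x y h => (hc.2 x y h).2.2) N,
        stage_sum c' (fun x y h => (hc'.2 x y h).2.2) N, hsums.1]
  have hl : ∑ k ∈ Finset.Ico 1 N, links c k = ∑ k ∈ Finset.Ico 1 N, links c' k := by
    rw [Finset.sum_congr rfl (fun k _ => links_eq_linkStage hc k),
        Finset.sum_congr rfl (fun k _ => links_eq_linkStage hc' k),
        stage_sum (Link c) (fun x y h => link_lt hc h) N,
        stage_sum (Link c') (fun x y h => link_lt hc' h) N, hsums.2]
  rw [nodeProb_tp t (ne_of_gt ht0) r hr htm N c, nodeProb_tp t (ne_of_gt ht0) r hr htm N c',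
    hv, hl]



lemma born_ne {a b : ℕ} (h : a ≠ b) : born a ≠ born b := fun he => h (born_inj he)

lemma lam_diag (t : ℕ → ℝ) (k : ℕ) : lam t k k = t k := by
  unfold lam
  simp

lemma lam_zero_pos (t : ℕ → ℝ) (ht0 : 0 < t 0) (htnn : ∀ k, 0 ≤ t k) (k : ℕ) :
    0 < lam t k 0 := by
  unfold lam
  apply Finset.sum_pos'
  · intro i _
    exact mul_nonneg (Nat.cast_nonneg _) (htnn _)
  · refine ⟨0, Finset.mem_range.2 (by omega), ?_⟩
    simpa using ht0

section Key

variable (t : ℕ → ℝ) (j : ℕ)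

/-- star with center the last-born element `b1`, leaves everything except `b2`. -/
def cA (j : ℕ) (x y : ℤ) : Prop :=
  x < y ∧ (x = born (j+3) ∨ y = born (j+3)) ∧ x ≠ born (j+2) ∧ y ≠ born (j+2) ∧
    x ∈ ground (j+4) ∧ y ∈ ground (j+4)

/-- star with center `b3 = born (j+1)`, leaves everything except `b1`. -/
def cB (j : ℕ) (x y : ℤ) : Prop :=
  x < y ∧ (x = born (j+1) ∨ y = born (j+1)) ∧ x ≠ born (j+3) ∧ y ≠ born (j+3) ∧
    x ∈ ground (j+4) ∧ y ∈ ground (j+4)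

lemma hpar (j : ℕ) :
    ((∀ w ∈ ground (j+3), born (j+3) < w) ∧
      (∀ w, (w ∈ ground (j+1) ∨ w = born (j+2)) → born (j+1) < w))
    ∨ ((∀ w ∈ ground (j+3), w < born (j+3)) ∧
      (∀ w, (w ∈ ground (j+1) ∨ w = born (j+2)) → w < born (j+1))) := by
  rcases Nat.even_or_odd j with he | ho
  · have hj : j % 2 = 0 := Nat.even_iff.1 he
    left
    refine ⟨fun w hw => born_lt_of_odd (by omega) hw, fun w hw => ?_⟩
    rcases hw with hw | rfl
    · exact born_lt_of_odd (by omega) hw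
    · rcases born_two_mul (j+1) with ⟨h1, h2⟩ | ⟨h1, h2⟩ <;>
        rcases born_two_mul (j+2) with ⟨h3, h4⟩ | ⟨h3, h4⟩ <;> omega
  · have hj : j % 2 = 1 := Nat.odd_iff.1 ho
    right
    refine ⟨fun w hw => lt_born_of_even (by omega) hw, fun w hw => ?_⟩
    rcases hw with hw | rfl
    · exact lt_born_of_even (by omega) hw
    · rcases born_two_mul (j+1) with ⟨h1, h2⟩ | ⟨h1, h2⟩ <;>
        rcases born_two_mul (j+2) with ⟨h3, h4⟩ | ⟨h3, h4⟩ <;> omega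

lemma mem_peel1 {j : ℕ} {w : ℤ} (hw : w ∈ ground (j+4)) (h1 : w ≠ born (j+3)) :
    w ∈ ground (j+3) := by
  rw [show j+4 = (j+3)+1 from rfl, ground_succ] at hw
  rcases hw with rfl | hw
  · exact absurd rfl h1
  · exact hw

lemma mem_peel2 {j : ℕ} {w : ℤ} (hw : w ∈ ground (j+3)) (h2 : w ≠ born (j+2)) :
    w ∈ ground (j+2) := by
  rw [show j+3 = (j+2)+1 from rfl, ground_succ] at hw
  rcases hw with rfl | hw
  · exact absurd rfl h2
  · exact hw

lemma mem_peel3 {j : ℕ} {w : ℤ} (hw : w ∈ ground (j+2)) (h3 : w ≠ born (j+1)) :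
    w ∈ ground (j+1) := by
  rw [show j+2 = (j+1)+1 from rfl, ground_succ] at hw
  rcases hw with rfl | hw
  · exact absurd rfl h3
  · exact hw

lemma noChainA {j : ℕ} {x z y : ℤ} (h1 : cA j x z) (h2 : cA j z y) : False := by
  obtain ⟨l1, d1, _, _, hx, hz⟩ := h1
  obtain ⟨l2, d2, _, hzb2, _, hy⟩ := h2
  rcases d1 with rfl | rfl
  · rcases d2 with rfl | rfl
    · exact absurd l1 (lt_irrefl _)
    · exact absurd (l1.trans l2) (lt_irrefl _)
  · rcases d2 with h | rfl
    · rcases hpar j with ⟨hp, _⟩ | ⟨hp, _⟩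
      · exact absurd (hp x (mem_peel1 hx (ne_of_lt l1))) (not_lt.2 l1.le)
      · exact absurd (hp y (mem_peel1 hy (ne_of_gt l2))) (not_lt.2 l2.le)
    · exact absurd l2 (lt_irrefl _)

lemma noChainB {j : ℕ} {x z y : ℤ} (h1 : cB j x z) (h2 : cB j z y) : False := by
  obtain ⟨l1, d1, hx3, _, hx, hz⟩ := h1
  obtain ⟨l2, d2, _, hy3, _, hy⟩ := h2
  rcases d1 with rfl | rfl
  · rcases d2 with rfl | rfl
    · exact absurd l1 (lt_irrefl _)
    · exact absurd (l1.trans l2) (lt_irrefl _)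
  · rcases d2 with h | rfl
    · -- x < born (j+1) < y with x, y ∈ ground (j+4) \ {born (j+3), born (j+1)}
      have hxL : x ∈ ground (j+1) ∨ x = born (j+2) := by
        by_cases hx2 : x = born (j+2)
        · exact Or.inr hx2
        · exact Or.inl (mem_peel3 (mem_peel2 (mem_peel1 hx hx3) hx2) (ne_of_lt l1))
      have hyL : y ∈ ground (j+1) ∨ y = born (j+2) := by
        by_cases hy2 : y = born (j+2)
        · exact Or.inr hy2
        · exact Or.inl (mem_peel3 (mem_peel2 (mem_peel1 hy hy3) hy2) (ne_of_gt l2))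
      rcases hpar j with ⟨_, hp⟩ | ⟨_, hp⟩
      · exact absurd (hp x hxL) (not_lt.2 l1.le)
      · exact absurd (hp y hyL) (not_lt.2 l2.le)
    · exact absurd l2 (lt_irrefl _)

lemma nodeA (j : ℕ) : IsNode (j+4) (cA j) :=
  ⟨fun _ _ _ h1 h2 => (noChainA h1 h2).elim,
   fun _ _ h => ⟨h.2.2.2.2.1, h.2.2.2.2.2, h.1⟩⟩

lemma nodeB (j : ℕ) : IsNode (j+4) (cB j) :=
  ⟨fun _ _ _ h1 h2 => (noChainB h1 h2).elim,
   fun _ _ h => ⟨h.2.2.2.2.1, h.2.2.2.2.2, h.1⟩⟩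

lemma linksA_eq (j k : ℕ) : links (cA j) k = varpi (cA j) k := by
  unfold links varpi
  congr 1
  ext x
  have hiff : ∀ u v, IsLinkIn (cA j) k u v ↔ cA j u v := fun u v =>
    ⟨fun h => h.1, fun h => ⟨h, fun ⟨z, _, hz⟩ => noChainA hz.1 hz.2⟩⟩
  simp only [Set.mem_setOf_eq, hiff]

lemma linksB_eq (j k : ℕ) : links (cB j) k = varpi (cB j) k := by
  unfold links varpi
  congr 1
  ext x
  have hiff : ∀ u v, IsLinkIn (cB j) k u v ↔ cB j u v := fun u v =>
    ⟨fun h => h.1, fun h => ⟨h, fun ⟨z, _, hz⟩ => noChainB hz.1 hz.2⟩⟩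
  simp only [Set.mem_setOf_eq, hiff]

lemma varpiA_zero (j k : ℕ) (hk : k ≤ j + 2) : varpi (cA j) k = 0 := by
  unfold varpi
  convert Set.ncard_empty ℤ
  ext x
  simp only [Set.mem_setOf_eq, Set.mem_empty_iff_false, iff_false, not_and]
  rintro hx (h | h)
  · rcases h.2.1 with rfl | h'
    · exact absurd (born_mem_ground_iff.1 hx) (by omega)
    · exact born_ne (by omega) h'.symm
  · rcases h.2.1 with h' | rfl
    · exact born_ne (by omega) h'
    · exact absurd (born_mem_ground_iff.1 hx) (by omega)

lemma varpiA_top (j : ℕ) : varpi (cA j) (j+3) = j + 2 := by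
  unfold varpi
  have hset : {x : ℤ | x ∈ ground (j+3) ∧ (cA j x (born (j+3)) ∨ cA j (born (j+3)) x)}
      = ground (j+2) := by
    ext x
    simp only [Set.mem_setOf_eq]
    constructor
    · rintro ⟨hx, h | h⟩
      · exact mem_peel2 hx h.2.2.1
      · exact mem_peel2 hx h.2.2.2.1
    · intro hx
      have hx3 : x ∈ ground (j+3) := ground_mono (by omega) hx
      have hx4 : x ∈ ground (j+4) := ground_mono (by omega) hx
      have hxb1 : x ≠ born (j+3) := fun h =>
        absurd (born_mem_ground_iff.1 (h ▸ hx)) (by omega)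
      have hxb2 : x ≠ born (j+2) := fun h =>
        absurd (born_mem_ground_iff.1 (h ▸ hx)) (by omega)
      have hb14 : born (j+3) ∈ ground (j+4) := born_mem_ground_iff.2 (by omega)
      have hb12 : born (j+3) ≠ born (j+2) := born_ne (by omega)
      refine ⟨hx3, ?_⟩
      rcases lt_trichotomy x (born (j+3)) with h | h | h
      · exact Or.inl ⟨h, Or.inr rfl, hxb2, hb12, hx4, hb14⟩
      · exact absurd h hxb1
      · exact Or.inr ⟨h, Or.inl rfl, hb12, hxb2, hb14, hx4⟩
  rw [hset, ncard_ground]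

lemma varpiB_zero_low (j k : ℕ) (hk : k ≤ j) : varpi (cB j) k = 0 := by
  unfold varpi
  convert Set.ncard_empty ℤ
  ext x
  simp only [Set.mem_setOf_eq, Set.mem_empty_iff_false, iff_false, not_and]
  rintro hx (h | h)
  · rcases h.2.1 with rfl | h'
    · exact absurd (born_mem_ground_iff.1 hx) (by omega)
    · exact born_ne (by omega) h'.symm
  · rcases h.2.1 with h' | rfl
    · exact born_ne (by omega) h'
    · exact absurd (born_mem_ground_iff.1 hx) (by omega)

lemma varpiB_zero_top (j : ℕ) : varpi (cB j) (j+3) = 0 := by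
  unfold varpi
  convert Set.ncard_empty ℤ
  ext x
  simp only [Set.mem_setOf_eq, Set.mem_empty_iff_false, iff_false, not_and]
  rintro hx (h | h)
  · exact h.2.2.2.1 rfl
  · exact h.2.2.1 rfl

lemma varpiB_mid (j : ℕ) : varpi (cB j) (j+1) = j + 1 := by
  unfold varpi
  have hset : {x : ℤ | x ∈ ground (j+1) ∧ (cB j x (born (j+1)) ∨ cB j (born (j+1)) x)}
      = ground (j+1) := by
    ext x
    simp only [Set.mem_setOf_eq]
    constructor
    · exact fun h => h.1
    · intro hx
      have hx4 : x ∈ ground (j+4) := ground_mono (by omega) hx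
      have hxb3 : x ≠ born (j+1) := fun h =>
        absurd (born_mem_ground_iff.1 (h ▸ hx)) (by omega)
      have hxb1 : x ≠ born (j+3) := fun h =>
        absurd (born_mem_ground_iff.1 (h ▸ hx)) (by omega)
      have hb34 : born (j+1) ∈ ground (j+4) := born_mem_ground_iff.2 (by omega)
      have hb31 : born (j+1) ≠ born (j+3) := born_ne (by omega)
      refine ⟨hx, ?_⟩
      rcases lt_trichotomy x (born (j+1)) with h | h | h
      · exact Or.inl ⟨h, Or.inr rfl, hxb1, hb31, hx4, hb34⟩
      · exact absurd h hxb3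
      · exact Or.inr ⟨h, Or.inl rfl, hb31, hxb1, hb34, hx4⟩
  rw [hset, ncard_ground]

lemma varpiB_b2 (j : ℕ) : varpi (cB j) (j+2) = 1 := by
  unfold varpi
  have hset : {x : ℤ | x ∈ ground (j+2) ∧ (cB j x (born (j+2)) ∨ cB j (born (j+2)) x)}
      = {born (j+1)} := by
    ext x
    simp only [Set.mem_setOf_eq, Set.mem_singleton_iff]
    constructor
    · rintro ⟨hx, h | h⟩
      · rcases h.2.1 with rfl | h'
        · rfl
        · exact absurd h' (born_ne (by omega))
      · rcases h.2.1 with h' | rfl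
        · exact absurd h' (born_ne (by omega))
        · rfl
    · rintro rfl
      have hb34 : born (j+1) ∈ ground (j+4) := born_mem_ground_iff.2 (by omega)
      have hb24 : born (j+2) ∈ ground (j+4) := born_mem_ground_iff.2 (by omega)
      have hb31 : born (j+1) ≠ born (j+3) := born_ne (by omega)
      have hb21 : born (j+2) ≠ born (j+3) := born_ne (by omega)
      have hb32 : born (j+1) ≠ born (j+2) := born_ne (by omega)
      refine ⟨born_mem_ground_iff.2 (by omega), ?_⟩
      rcases lt_trichotomy (born (j+1)) (born (j+2)) with h | h | h
      · exact Or.inl ⟨h, Or.inl rfl, hb31, hb21, hb34, hb24⟩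
      · exact absurd h hb32
      · exact Or.inr ⟨h, Or.inr rfl, hb21, hb31, hb24, hb34⟩
  rw [hset, Set.ncard_singleton]


/-- the 3-cycle `b1 → b3 → b2 → b1`, identity elsewhere. -/
def gIso (j : ℕ) (x : ℤ) : ℤ :=
  if x = born (j+3) then born (j+1)
  else if x = born (j+1) then born (j+2)
  else if x = born (j+2) then born (j+3) else x

lemma gb1 (j : ℕ) : gIso j (born (j+3)) = born (j+1) := if_pos rfl

lemma gb3 (j : ℕ) : gIso j (born (j+1)) = born (j+2) := by
  unfold gIso
  rw [if_neg (born_ne (by omega)), if_pos rfl]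

lemma gb2 (j : ℕ) : gIso j (born (j+2)) = born (j+3) := by
  unfold gIso
  rw [if_neg (born_ne (by omega)), if_neg (born_ne (by omega)), if_pos rfl]

lemma gother (j : ℕ) {x : ℤ} (h1 : x ≠ born (j+3)) (h3 : x ≠ born (j+1))
    (h2 : x ≠ born (j+2)) : gIso j x = x := by
  unfold gIso
  rw [if_neg h1, if_neg h3, if_neg h2]

lemma gggg (j : ℕ) (x : ℤ) : gIso j (gIso j (gIso j x)) = x := by
  by_cases h1 : x = born (j+3)
  · subst h1; rw [gb1, gb3, gb2]
  · by_cases h3 : x = born (j+1)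
    · subst h3; rw [gb3, gb2, gb1]
    · by_cases h2 : x = born (j+2)
      · subst h2; rw [gb2, gb1, gb3]
      · rw [gother j h1 h3 h2, gother j h1 h3 h2, gother j h1 h3 h2]

lemma ginj (j : ℕ) : Function.Injective (gIso j) := by
  intro a b hab
  rw [← gggg j a, hab, gggg j b]

lemma gmaps (j : ℕ) : ∀ x ∈ ground (j+4), gIso j x ∈ ground (j+4) := by
  intro x hx
  by_cases h1 : x = born (j+3)
  · subst h1; rw [gb1]; exact born_mem_ground_iff.2 (by omega)
  · by_cases h3 : x = born (j+1)
    · subst h3; rw [gb3]; exact born_mem_ground_iff.2 (by omega)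
    · by_cases h2 : x = born (j+2)
      · subst h2; rw [gb2]; exact born_mem_ground_iff.2 (by omega)
      · rw [gother j h1 h3 h2]; exact hx

lemma gsurj (j : ℕ) : Set.SurjOn (gIso j) (ground (j+4)) (ground (j+4)) := by
  intro y hy
  exact ⟨gIso j (gIso j y), gmaps j _ (gmaps j _ hy), gggg j y⟩

/-- `x = b1 ↔ g x = b3`. -/
lemma m1 (j : ℕ) (x : ℤ) : x = born (j+3) ↔ gIso j x = born (j+1) := by
  constructor
  · rintro rfl; exact gb1 j
  · intro h
    by_cases h1 : x = born (j+3)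
    · exact h1
    · by_cases h3 : x = born (j+1)
      · subst h3; rw [gb3] at h; exact absurd h (born_ne (by omega))
      · by_cases h2 : x = born (j+2)
        · subst h2; rw [gb2] at h; exact absurd h (born_ne (by omega))
        · rw [gother j h1 h3 h2] at h; exact absurd h h3

/-- `x = b2 ↔ g x = b1`. -/
lemma m2 (j : ℕ) (x : ℤ) : x = born (j+2) ↔ gIso j x = born (j+3) := by
  constructor
  · rintro rfl; exact gb2 j
  · intro h
    by_cases h1 : x = born (j+3)
    · subst h1; rw [gb1] at h; exact absurd h (born_ne (by omega))
    · by_cases h3 : x = born (j+1)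
      · subst h3; rw [gb3] at h; exact absurd h (born_ne (by omega))
      · by_cases h2 : x = born (j+2)
        · exact h2
        · rw [gother j h1 h3 h2] at h; exact absurd h h1

/-- image of a non-center non-isolated point lands in the leaf set of `cB`. -/
lemma gmemL (j : ℕ) {w : ℤ} (hw : w ∈ ground (j+4)) (h1 : w ≠ born (j+3))
    (h2 : w ≠ born (j+2)) : gIso j w ∈ ground (j+1) ∨ gIso j w = born (j+2) := by
  by_cases h3 : w = born (j+1)
  · subst h3; rw [gb3]; exact Or.inr rfl
  · rw [gother j h1 h3 h2]
    exact Or.inl (mem_peel3 (mem_peel2 (mem_peel1 hw h1) h2) h3)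

lemma isoAB (j : ℕ) : NodeIso (j+4) (cA j) (cB j) := by
  refine ⟨gIso j, ⟨gmaps j, (ginj j).injOn, gsurj j⟩, ?_⟩
  intro x hx y hy
  constructor
  · rintro ⟨hlt, hd, hxb2, hyb2, hx4, hy4⟩
    have hgx : gIso j x ∈ ground (j+4) := gmaps j _ hx4
    have hgy : gIso j y ∈ ground (j+4) := gmaps j _ hy4
    have hgx1 : gIso j x ≠ born (j+3) := fun h => hxb2 ((m2 j x).2 h)
    have hgy1 : gIso j y ≠ born (j+3) := fun h => hyb2 ((m2 j y).2 h)
    rcases hd with rfl | rfl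
    · -- x = b1, b1 < y
      have hyne : y ≠ born (j+3) := ne_of_gt hlt
      rcases hpar j with ⟨h1, h2⟩ | ⟨h1, h2⟩
      · refine ⟨?_, Or.inl (gb1 j), hgx1, hgy1, hgx, hgy⟩
        rw [gb1]
        exact h2 _ (gmemL j hy4 hyne hyb2)
      · exact absurd (h1 y (mem_peel1 hy4 hyne)) (not_lt.2 hlt.le)
    · -- y = b1, x < b1
      have hxne : x ≠ born (j+3) := ne_of_lt hlt
      rcases hpar j with ⟨h1, h2⟩ | ⟨h1, h2⟩
      · exact absurd (h1 x (mem_peel1 hx4 hxne)) (not_lt.2 hlt.le)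
      · refine ⟨?_, Or.inr (gb1 j), hgx1, hgy1, hgx, hgy⟩
        rw [gb1]
        exact h2 _ (gmemL j hx4 hxne hxb2)
  · rintro ⟨hlt, hd, hgx1, hgy1, _, _⟩
    have hxb2 : x ≠ born (j+2) := fun h => hgx1 ((m2 j x).1 h)
    have hyb2 : y ≠ born (j+2) := fun h => hgy1 ((m2 j y).1 h)
    have hb1g : born (j+3) ∈ ground (j+4) := born_mem_ground_iff.2 (by omega)
    have hb12 : born (j+3) ≠ born (j+2) := born_ne (by omega)
    rcases hd with h3 | h3
    · -- g x = b3, so x = b1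
      have hx1 : x = born (j+3) := (m1 j x).2 h3
      subst hx1
      have hyne : y ≠ born (j+3) := by
        intro h
        rw [h] at hlt
        exact absurd hlt (lt_irrefl _)
      rcases hpar j with ⟨h1, h2⟩ | ⟨h1, h2⟩
      · exact ⟨h1 y (mem_peel1 hy hyne), Or.inl rfl, hb12, hyb2, hx, hy⟩
      · have hgyL := h2 (gIso j y) (gmemL j hy hyne hyb2)
        rw [← h3] at hgyL
        exact absurd hlt (not_lt.2 hgyL.le)
    · -- g y = b3, so y = b1
      have hy1 : y = born (j+3) := (m1 j y).2 h3
      subst hy1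
      have hxne : x ≠ born (j+3) := by
        intro h
        rw [h] at hlt
        exact absurd hlt (lt_irrefl _)
      rcases hpar j with ⟨h1, h2⟩ | ⟨h1, h2⟩
      · have hgxL := h2 (gIso j x) (gmemL j hx hxne hxb2)
        rw [← h3] at hgxL
        exact absurd hlt (not_lt.2 hgxL.le)
      · exact ⟨h1 x (mem_peel1 hx hxne), Or.inr rfl, hxb2, hb12, hx, hb1g⟩


lemma nodeProbA (t : ℕ → ℝ) (j : ℕ) :
    nodeProb t (j+4) (cA j)
      = (t 0 ^ (j+2) * t (j+2)) / ∏ k ∈ Finset.Ico 1 (j+4), lam t k 0 := by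
  unfold nodeProb
  rw [Finset.prod_div_distrib]
  congr 1
  have hnum : ∀ k ∈ Finset.Ico 1 (j+4), lam t (varpi (cA j) k) (links (cA j) k)
      = if k = j+3 then t (j+2) else t 0 := by
    intro k hk
    simp only [Finset.mem_Ico] at hk
    rw [linksA_eq, lam_diag]
    by_cases h : k = j+3
    · subst h; rw [varpiA_top, if_pos rfl]
    · rw [varpiA_zero j k (by omega), if_neg h]
  rw [Finset.prod_congr rfl hnum, show j+4 = (j+3)+1 from rfl,
    Finset.prod_Ico_succ_top (by omega), if_pos rfl]
  have hconst : ∀ k ∈ Finset.Ico 1 (j+3), (if k = j+3 then t (j+2) else t 0) = t 0 := by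
    intro k hk
    simp only [Finset.mem_Ico] at hk
    rw [if_neg (by omega)]
  rw [Finset.prod_congr rfl hconst, Finset.prod_const, Nat.card_Ico]
  norm_num

lemma nodeProbB (t : ℕ → ℝ) (j : ℕ) :
    nodeProb t (j+4) (cB j)
      = (t 0 ^ (j+1) * t (j+1) * t 1) / ∏ k ∈ Finset.Ico 1 (j+4), lam t k 0 := by
  unfold nodeProb
  rw [Finset.prod_div_distrib]
  congr 1
  have hnum : ∀ k ∈ Finset.Ico 1 (j+4), lam t (varpi (cB j) k) (links (cB j) k)
      = if k = j+1 then t (j+1) else if k = j+2 then t 1 else t 0 := by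
    intro k hk
    simp only [Finset.mem_Ico] at hk
    rw [linksB_eq, lam_diag]
    by_cases h1 : k = j+1
    · subst h1; rw [varpiB_mid, if_pos rfl]
    · by_cases h2 : k = j+2
      · subst h2; rw [varpiB_b2, if_neg (by omega), if_pos rfl]
      · rw [if_neg h1, if_neg h2]
        by_cases h3 : k = j+3
        · subst h3; rw [varpiB_zero_top]
        · rw [varpiB_zero_low j k (by omega)]
  rw [Finset.prod_congr rfl hnum, show j+4 = (j+3)+1 from rfl,
    Finset.prod_Ico_succ_top (by omega),
    show j+3 = (j+2)+1 from rfl, Finset.prod_Ico_succ_top (by omega),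
    show j+2 = (j+1)+1 from rfl, Finset.prod_Ico_succ_top (by omega)]
  rw [if_pos rfl, if_neg (by omega), if_pos rfl, if_neg (by omega), if_neg (by omega)]
  have hconst : ∀ k ∈ Finset.Ico 1 (j+1),
      (if k = j+1 then t (j+1) else if k = j+2 then t 1 else t 0) = t 0 := by
    intro k hk
    simp only [Finset.mem_Ico] at hk
    rw [if_neg (by omega), if_neg (by omega)]
  rw [Finset.prod_congr rfl hconst, Finset.prod_const, Nat.card_Ico]
  have : j + 1 - 1 = j := by omega
  rw [this, pow_succ]
  ring

lemma key (t : ℕ → ℝ) (ht0 : 0 < t 0) (htnn : ∀ k, 0 ≤ t k)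
    (h : ∀ N : ℕ, 1 ≤ N → ∀ c c' : ℤ → ℤ → Prop, IsNode N c → IsNode N c' →
        NodeIso N c c' → nodeProb t N c = nodeProb t N c') (j : ℕ) :
    t (j+2) * t 0 = t (j+1) * t 1 := by
  have heq := h (j+4) (by omega) _ _ (nodeA j) (nodeB j) (isoAB j)
  rw [nodeProbA, nodeProbB] at heq
  have hD : (0:ℝ) < ∏ k ∈ Finset.Ico 1 (j+4), lam t k 0 :=
    Finset.prod_pos (fun k _ => lam_zero_pos t ht0 htnn k)
  rw [div_eq_div_iff hD.ne' hD.ne'] at heq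
  have heq2 : t 0 ^ (j+2) * t (j+2) = t 0 ^ (j+1) * t (j+1) * t 1 :=
    mul_right_cancel₀ hD.ne' heq
  have hp : t 0 ^ (j+1) ≠ 0 := pow_ne_zero _ ht0.ne'
  apply mul_left_cancel₀ hp
  calc t 0 ^ (j+1) * (t (j+2) * t 0) = t 0 ^ (j+2) * t (j+2) := by rw [pow_succ]; ring
    _ = t 0 ^ (j+1) * t (j+1) * t 1 := heq2
    _ = t 0 ^ (j+1) * (t (j+1) * t 1) := by ring

lemma forward (t : ℕ → ℝ) (ht0 : 0 < t 0) (htnn : ∀ k, 0 ≤ t k)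
    (h : ∀ N : ℕ, 1 ≤ N → ∀ c c' : ℤ → ℤ → Prop, IsNode N c → IsNode N c' →
        NodeIso N c c' → nodeProb t N c = nodeProb t N c') :
    ∀ n : ℕ, 1 ≤ n → t n * t 0 ^ (n - 1) = t 1 ^ n := by
  intro n hn
  induction n with
  | zero => omega
  | succ m ih =>
    rcases Nat.eq_zero_or_pos m with rfl | hm
    · simp
    · have ihm := ih hm
      obtain ⟨i, rfl⟩ : ∃ i, m = i + 1 := ⟨m - 1, by omega⟩
      simp only [Nat.add_sub_cancel] at ihm ⊢
      have hk := key t ht0 htnn h i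
      calc t (i+2) * t 0 ^ (i+1) = (t (i+2) * t 0) * t 0 ^ i := by rw [pow_succ]; ring
        _ = (t (i+1) * t 1) * t 0 ^ i := by rw [hk]
        _ = t 1 * (t (i+1) * t 0 ^ i) := by ring
        _ = t 1 * t 1 ^ (i+1) := by rw [ihm]
        _ = t 1 ^ (i+2) := by ring

end Key

end S6

/-- An Alternating CSG model satisfies Discrete General Covariance
(`P(C̃) = P(C̃')` for order-isomorphic nodes) if and only if it is an Alternating
Transitive Percolation model (`t_n t_0^{n-1} = t_1^n` for all `n ≥ 1`). -/
theorem stmt_6 (t : ℕ → ℝ) (ht0 : 0 < t 0) (ht : ∀ k : ℕ, 1 ≤ k → 0 ≤ t k) :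
    (∀ N : ℕ, 1 ≤ N → ∀ c c' : ℤ → ℤ → Prop, IsNode N c → IsNode N c' →
        NodeIso N c c' → nodeProb t N c = nodeProb t N c') ↔
      (∀ n : ℕ, 1 ≤ n → t n * t 0 ^ (n - 1) = t 1 ^ n) := by
  constructor
  · intro h
    exact S6.forward t ht0
      (fun k => by
        rcases Nat.eq_zero_or_pos k with rfl | hk
        · exact ht0.le
        · exact ht k hk) h
  · intro hTP
    exact S6.backward t ht0 (ht 1 le_rfl) hTP
end

section
/- A node Γ_n of convex-covtree is maximal (i.e., there exists no node Δ consisting of (n+1)-orders with O⁻(Δ) = Γ_n) if and only if Γ_n is a singleton {C} for some n-order C and every certificate of Γ_n is order-isomorphic to C. -/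
/-- A strict partial order on `Fin n` (a representative of an `n`-order). -/
def FinSPO (n : ℕ) : Type :=
  {r : Fin n → Fin n → Prop // Transitive r ∧ ∀ x : Fin n, ¬ r x x}

/-- Order-isomorphism of representatives. -/
def IsoFin {n : ℕ} (p q : FinSPO n) : Prop :=
  ∃ g : Fin n ≃ Fin n, ∀ a b : Fin n, p.1 a b ↔ q.1 (g a) (g b)

/-- An `n`-order: an order-isomorphism class of `n`-element strict partial orders. -/
def NOrder (n : ℕ) : Type := Quot (@IsoFin n)

/-- The `n`-order represented by `p`. -/
def toNOrder {n : ℕ} (p : FinSPO n) : NOrder n := Quot.mk _ p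

/-- `S` is a (finite) convex subset of the causet `(α, r)`. -/
def IsConvexIn {α : Type*} (r : α → α → Prop) (S : Set α) : Prop :=
  S.Finite ∧ ∀ x ∈ S, ∀ y ∈ S, ∀ z : α, r x z → r z y → z ∈ S

/-- The representative `p` is realised by a convex subset of the causet `(α, r)`. -/
def RepConvex {α : Type*} (r : α → α → Prop) {n : ℕ} (p : FinSPO n) : Prop :=
  ∃ g : Fin n → α, Function.Injective g ∧ IsConvexIn r (Set.range g) ∧
    ∀ a b : Fin n, p.1 a b ↔ r (g a) (g b)

/-- The set of `n`-convex-suborders of the causet `(α, r)`. -/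
def convexSubords {α : Type*} (r : α → α → Prop) (n : ℕ) : Set (NOrder n) :=
  {o | ∃ p : FinSPO n, o = toNOrder p ∧ RepConvex r p}

/-- A (finite or countably infinite) causal set: a countable strict partial order
which is locally finite. -/
structure Causet where
  carrier : Type
  rel : carrier → carrier → Prop
  countable : Countable carrier
  trans : Transitive rel
  irrefl : ∀ x : carrier, ¬ rel x x
  locFin : ∀ x y : carrier, {z : carrier | rel x z ∧ rel z y}.Finite

/-- `C` is a certificate of `Γ`: the set of `n`-convex-suborders of `C` equals `Γ`. -/
def IsCert (C : Causet) {n : ℕ} (Γ : Set (NOrder n)) : Prop :=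
  convexSubords C.rel n = Γ

/-- `Γ` is a node of convex-covtree: it has at least one certificate. -/
def IsNodeCC {n : ℕ} (Γ : Set (NOrder n)) : Prop := ∃ C : Causet, IsCert C Γ

/-- `O⁻(Γ)`: the set of `n`-orders represented by convex subsets of representatives
of members of `Γ`. -/
def Ominus {n : ℕ} (Γ : Set (NOrder (n + 1))) : Set (NOrder n) :=
  {o | ∃ q : FinSPO n, o = toNOrder q ∧
    ∃ p : FinSPO (n + 1), toNOrder p ∈ Γ ∧ RepConvex p.1 q}

/-- The causet `C` is order-isomorphic to the representative `p`. -/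
def IsoToRep (C : Causet) {n : ℕ} (p : FinSPO n) : Prop :=
  ∃ g : Fin n → C.carrier, Function.Bijective g ∧
    ∀ a b : Fin n, p.1 a b ↔ C.rel (g a) (g b)

/-! ### Auxiliary lemmas -/

lemma isoFin_equivalence (n : ℕ) : Equivalence (@IsoFin n) := by
  constructor
  · exact fun p => ⟨Equiv.refl _, fun a b => Iff.rfl⟩
  · rintro p q ⟨g, hg⟩
    exact ⟨g.symm, fun a b => by rw [hg (g.symm a) (g.symm b)]; simp⟩
  · rintro p q r ⟨g, hg⟩ ⟨h, hh⟩
    exact ⟨g.trans h, fun a b => (hg a b).trans (hh (g a) (g b))⟩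

lemma toNOrder_eq {n : ℕ} {p q : FinSPO n} : toNOrder p = toNOrder q ↔ IsoFin p q := by
  unfold toNOrder
  change @Eq (Quot (@IsoFin n)) (Quot.mk _ p) (Quot.mk _ q) ↔ _
  rw [Quot.eq, (isoFin_equivalence n).eqvGen_iff]

lemma repConvex_comp {α : Type*} {r : α → α → Prop} {N n : ℕ} {p : FinSPO N} {q : FinSPO n}
    (hp : RepConvex r p) (hq : RepConvex p.1 q) : RepConvex r q := by
  obtain ⟨g, hgi, hgc, hgr⟩ := hp
  obtain ⟨h, hhi, hhc, hhr⟩ := hq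
  refine ⟨g ∘ h, hgi.comp hhi, ⟨Set.finite_range _, ?_⟩, fun a b => (hhr a b).trans (hgr _ _)⟩
  rintro _ ⟨a, rfl⟩ _ ⟨b, rfl⟩ z hz1 hz2
  obtain ⟨c, rfl⟩ := hgc.2 _ ⟨h a, rfl⟩ _ ⟨h b, rfl⟩ z hz1 hz2
  obtain ⟨d, rfl⟩ := hhc.2 _ ⟨a, rfl⟩ _ ⟨b, rfl⟩ c ((hgr _ _).mpr hz1) ((hgr _ _).mpr hz2)
  exact ⟨d, rfl⟩

lemma repConvex_iso {N n : ℕ} {p p' : FinSPO N} {q : FinSPO n} (h : IsoFin p p')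
    (hq : RepConvex p.1 q) : RepConvex p'.1 q := by
  obtain ⟨e, he⟩ := h
  obtain ⟨f, hfi, hfc, hfr⟩ := hq
  refine ⟨e ∘ f, e.injective.comp hfi, ⟨Set.finite_range _, ?_⟩,
    fun a b => (hfr a b).trans (he _ _)⟩
  rintro _ ⟨a, rfl⟩ _ ⟨b, rfl⟩ z hz1 hz2
  have h1 : p.1 (f a) (e.symm z) := by rw [he]; simpa using hz1
  have h2 : p.1 (e.symm z) (f b) := by rw [he]; simpa using hz2
  obtain ⟨c, hc⟩ := hfc.2 _ ⟨a, rfl⟩ _ ⟨b, rfl⟩ (e.symm z) h1 h2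
  exact ⟨c, by rw [Function.comp_apply, hc]; simp⟩

lemma isoToRep_of_isoFin {n : ℕ} {C : Causet} {p p' : FinSPO n} (h : IsoFin p p')
    (h' : IsoToRep C p') : IsoToRep C p := by
  obtain ⟨e, he⟩ := h
  obtain ⟨g, hgb, hgr⟩ := h'
  exact ⟨g ∘ e, hgb.comp e.bijective, fun a b => (he a b).trans (hgr (e a) (e b))⟩

lemma exists_min_aux {α : Type*} {r : α → α → Prop} (ht : Transitive r)
    (hirr : ∀ x, ¬ r x x) :
    ∀ (k : ℕ) (A : Set α), A.Finite → A.ncard ≤ k → A.Nonempty →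
      ∃ z ∈ A, ∀ w ∈ A, ¬ r w z := by
  intro k
  induction k with
  | zero =>
    intro A hA hk hne
    rw [Nat.le_zero, Set.ncard_eq_zero hA] at hk
    exact absurd hk hne.ne_empty
  | succ k ih =>
    intro A hA hk hne
    obtain ⟨a, ha⟩ := hne
    by_cases hmin : ∀ w ∈ A, ¬ r w a
    · exact ⟨a, ha, hmin⟩
    · push_neg at hmin
      obtain ⟨w, hw, hrw⟩ := hmin
      have hBsub : {w ∈ A | r w a} ⊆ A \ {a} := by
        rintro x ⟨hx, hrx⟩
        exact ⟨hx, fun h => hirr a (h ▸ hrx)⟩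
      have hBfin : {w ∈ A | r w a}.Finite := hA.subset (fun x hx => hx.1)
      have hcard : {w ∈ A | r w a}.ncard ≤ k := by
        have h1 : {w ∈ A | r w a}.ncard ≤ (A \ {a}).ncard :=
          Set.ncard_le_ncard hBsub (hA.diff)
        have h2 : (A \ {a}).ncard < A.ncard := Set.ncard_diff_singleton_lt_of_mem ha hA
        omega
      obtain ⟨z, ⟨hzA, hza⟩, hzmin⟩ := ih _ hBfin hcard ⟨w, hw, hrw⟩
      refine ⟨z, hzA, fun v hv hrv => ?_⟩
      exact hzmin v ⟨hv, ht hrv hza⟩ hrv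

lemma exists_min {α : Type*} {r : α → α → Prop} (ht : Transitive r)
    (hirr : ∀ x, ¬ r x x) {A : Set α} (hA : A.Finite) (hne : A.Nonempty) :
    ∃ z ∈ A, ∀ w ∈ A, ¬ r w z :=
  exists_min_aux ht hirr A.ncard A hA le_rfl hne

lemma exists_max {α : Type*} {r : α → α → Prop} (ht : Transitive r)
    (hirr : ∀ x, ¬ r x x) {A : Set α} (hA : A.Finite) (hne : A.Nonempty) :
    ∃ z ∈ A, ∀ w ∈ A, ¬ r z w := by
  have := exists_min (r := flip r) (fun _ _ _ h1 h2 => ht h2 h1) hirr hA hne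
  simpa [flip] using this

lemma convex_remove {α : Type*} {r : α → α → Prop} (ht : Transitive r)
    (hirr : ∀ x, ¬ r x x) {S T : Set α} (hS : IsConvexIn r S) (hT : IsConvexIn r T)
    (hST : S ⊆ T) (hne : S ≠ T) :
    ∃ z ∈ T \ S, IsConvexIn r (T \ {z}) := by
  have hTS : (T \ S).Nonempty := by
    rw [Set.diff_nonempty]
    exact fun h => hne (le_antisymm hST h)
  by_cases hU : ({w ∈ T \ S | ∃ v ∈ S, r w v}).Nonempty
  · obtain ⟨z, ⟨hzTS, v, hvS, hzv⟩, hzmin⟩ :=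
      exists_min ht hirr ((hT.1.diff).subset (fun x hx => hx.1)) hU
    refine ⟨z, hzTS, hT.1.diff, ?_⟩
    rintro x ⟨hxT, hxz⟩ y ⟨hyT, hyz⟩ w hxw hwy
    refine ⟨hT.2 x hxT y hyT w hxw hwy, fun hwz : w ∈ ({z} : Set α) => ?_⟩
    rw [Set.mem_singleton_iff] at hwz
    subst hwz
    by_cases hxS : x ∈ S
    · exact hzTS.2 (hS.2 x hxS v hvS _ hxw hzv)
    · exact hzmin x ⟨⟨hxT, hxS⟩, v, hvS, ht hxw hzv⟩ hxw
  · obtain ⟨z, hzTS, hzmax⟩ := exists_max ht hirr (hT.1.diff) hTS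
    refine ⟨z, hzTS, hT.1.diff, ?_⟩
    rintro x ⟨hxT, hxz⟩ y ⟨hyT, hyz⟩ w hxw hwy
    refine ⟨hT.2 x hxT y hyT w hxw hwy, fun hwz : w ∈ ({z} : Set α) => ?_⟩
    rw [Set.mem_singleton_iff] at hwz
    subst hwz
    by_cases hyS : y ∈ S
    · exact hU ⟨w, hzTS, y, hyS, hwy⟩
    · exact hzmax y ⟨hyT, hyS⟩ hwy

lemma hull_spec {α : Type*} {r : α → α → Prop} (ht : Transitive r)
    (hlf : ∀ x y : α, {z | r x z ∧ r z y}.Finite) {S : Set α} (hSf : S.Finite) (x : α) :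
    ∃ T : Set α, IsConvexIn r T ∧ insert x S ⊆ T := by
  set A := insert x S with hA
  have hAf : A.Finite := hSf.insert x
  refine ⟨A ∪ ⋃ a ∈ A, ⋃ b ∈ A, {z | r a z ∧ r z b}, ⟨?_, ?_⟩, Set.subset_union_left⟩
  · exact hAf.union (hAf.biUnion fun a _ => hAf.biUnion fun b _ => hlf a b)
  · intro u hu v hv w huw hwv
    have ha : ∃ a ∈ A, r a w := by
      rcases hu with hu | hu
      · exact ⟨u, hu, huw⟩
      · simp only [Set.mem_iUnion] at hu
        obtain ⟨a, haA, b, hbA, hau, _⟩ := hu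
        exact ⟨a, haA, ht hau huw⟩
    have hb : ∃ b ∈ A, r w b := by
      rcases hv with hv | hv
      · exact ⟨v, hv, hwv⟩
      · simp only [Set.mem_iUnion] at hv
        obtain ⟨a, haA, b, hbA, _, hvb⟩ := hv
        exact ⟨b, hbA, ht hwv hvb⟩
    obtain ⟨a, haA, haw⟩ := ha
    obtain ⟨b, hbA, hwb⟩ := hb
    right
    simp only [Set.mem_iUnion]
    exact ⟨a, haA, b, hbA, haw, hwb⟩

lemma convex_extend_aux {α : Type*} {r : α → α → Prop} (ht : Transitive r)
    (hirr : ∀ x, ¬ r x x) :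
    ∀ (k : ℕ) (S T : Set α), IsConvexIn r S → IsConvexIn r T → S ⊆ T → S ≠ T →
      (T \ S).ncard ≤ k → ∃ z ∉ S, IsConvexIn r (insert z S) := by
  intro k
  induction k with
  | zero =>
    intro S T hS hT hST hne hk
    rw [Nat.le_zero, Set.ncard_eq_zero (hT.1.diff), Set.diff_eq_empty] at hk
    exact absurd (le_antisymm hST hk) hne
  | succ k ih =>
    intro S T hS hT hST hne hk
    obtain ⟨z, ⟨hzT, hzS⟩, hconv⟩ := convex_remove ht hirr hS hT hST hne
    by_cases heq : T \ {z} = S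
    · refine ⟨z, hzS, ?_⟩
      have : insert z S = T := by
        rw [← heq]
        ext w
        simp only [Set.mem_insert_iff, Set.mem_diff, Set.mem_singleton_iff]
        constructor
        · rintro (rfl | ⟨hw, _⟩) <;> [exact hzT; exact hw]
        · intro hw
          by_cases hwz : w = z
          · exact Or.inl hwz
          · exact Or.inr ⟨hw, hwz⟩
      rwa [this]
    · have hsub : S ⊆ T \ {z} := fun w hw =>
        ⟨hST hw, fun h => hzS (Set.mem_singleton_iff.mp h ▸ hw)⟩
      have hcard : ((T \ {z}) \ S).ncard ≤ k := by
        have h1 : (T \ {z}) \ S ⊆ (T \ S) \ {z} := by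
          rintro w ⟨⟨hwT, hwz⟩, hwS⟩; exact ⟨⟨hwT, hwS⟩, hwz⟩
        have h2 : ((T \ S) \ {z}).ncard < (T \ S).ncard :=
          Set.ncard_diff_singleton_lt_of_mem ⟨hzT, hzS⟩ (hT.1.diff)
        have h3 := Set.ncard_le_ncard h1 ((hT.1.diff).diff)
        omega
      exact ih S (T \ {z}) hS hconv hsub (fun h => heq h.symm) hcard

lemma convex_extend {α : Type*} {r : α → α → Prop} (ht : Transitive r)
    (hirr : ∀ x, ¬ r x x) (hlf : ∀ x y : α, {z | r x z ∧ r z y}.Finite)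
    {S : Set α} (hS : IsConvexIn r S) {x : α} (hx : x ∉ S) :
    ∃ z ∉ S, IsConvexIn r (insert z S) := by
  obtain ⟨T, hT, hsub⟩ := hull_spec ht hlf hS.1 x
  have hST : S ⊆ T := (Set.subset_insert x S).trans hsub
  have hne : S ≠ T := fun h => hx (h ▸ hsub (Set.mem_insert x S))
  exact convex_extend_aux ht hirr (T \ S).ncard S T hS hT hST hne le_rfl

lemma snoc_injective {n : ℕ} {α : Type*} {g : Fin n → α} (hg : Function.Injective g)
    {x : α} (hx : x ∉ Set.range g) : Function.Injective (Fin.snoc g x : Fin (n+1) → α) := by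
  intro a b hab
  induction a using Fin.lastCases with
  | last =>
    induction b using Fin.lastCases with
    | last => rfl
    | cast b => rw [Fin.snoc_last, Fin.snoc_castSucc] at hab; exact absurd ⟨b, hab.symm⟩ hx
  | cast a =>
    induction b using Fin.lastCases with
    | last => rw [Fin.snoc_last, Fin.snoc_castSucc] at hab; exact absurd ⟨a, hab⟩ hx
    | cast b => rw [Fin.snoc_castSucc, Fin.snoc_castSucc] at hab; rw [hg hab]

lemma range_snoc {n : ℕ} {α : Type*} (g : Fin n → α) (x : α) :
    Set.range (Fin.snoc g x : Fin (n+1) → α) = insert x (Set.range g) := by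
  ext w
  constructor
  · rintro ⟨a, rfl⟩
    induction a using Fin.lastCases with
    | last => rw [Fin.snoc_last]; exact Set.mem_insert _ _
    | cast a => rw [Fin.snoc_castSucc]; exact Set.mem_insert_of_mem _ ⟨a, rfl⟩
  · rintro (rfl | ⟨a, rfl⟩)
    · exact ⟨Fin.last n, Fin.snoc_last _ _⟩
    · exact ⟨a.castSucc, Fin.snoc_castSucc _ _ _⟩

lemma subord_in_ominus {m : ℕ} (D : Causet) {f : Fin (m+2) → D.carrier}
    (hf : Function.Injective f) {p : FinSPO (m+1)} (hp : RepConvex D.rel p) :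
    toNOrder p ∈ Ominus (convexSubords D.rel (m+2)) := by
  obtain ⟨g, hgi, hgc, hgr⟩ := hp
  have hns : ¬ Function.Surjective g := by
    intro hs
    have hinj : Function.Injective (Function.surjInv hs ∘ f) :=
      (Function.injective_surjInv hs).comp hf
    have := Fintype.card_le_of_injective _ hinj
    simp at this
  rw [Function.Surjective] at hns
  push_neg at hns
  obtain ⟨x, hx⟩ := hns
  have hxr : x ∉ Set.range g := by rintro ⟨a, rfl⟩; exact hx a rfl
  obtain ⟨z, hz, hconv⟩ := convex_extend D.trans D.irrefl D.locFin hgc hxr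
  set G : Fin (m+2) → D.carrier := Fin.snoc g z with hG
  have hGi : Function.Injective G := snoc_injective hgi hz
  have hGr : Set.range G = insert z (Set.range g) := range_snoc g z
  set P : FinSPO (m+2) := ⟨fun a b => D.rel (G a) (G b),
    fun a b c hab hbc => D.trans hab hbc, fun a => D.irrefl (G a)⟩ with hP
  have hPconv : RepConvex D.rel P := ⟨G, hGi, by rw [hGr]; exact hconv, fun a b => Iff.rfl⟩
  refine ⟨p, rfl, P, ⟨P, rfl, hPconv⟩, ?_⟩
  refine ⟨Fin.castSucc, Fin.castSucc_injective _, ⟨Set.finite_range _, ?_⟩, fun a b => ?_⟩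
  · rintro _ ⟨a, rfl⟩ _ ⟨b, rfl⟩ c h1 h2
    have h1' : D.rel (g a) (G c) := by
      have : D.rel (G a.castSucc) (G c) := h1
      rwa [hG, Fin.snoc_castSucc] at this
    have h2' : D.rel (G c) (g b) := by
      have : D.rel (G c) (G b.castSucc) := h2
      rwa [hG, Fin.snoc_castSucc] at this
    have hmem : G c ∈ Set.range g := hgc.2 _ ⟨a, rfl⟩ _ ⟨b, rfl⟩ _ h1' h2'
    induction c using Fin.lastCases with
    | last =>
      exfalso
      rw [hG, Fin.snoc_last] at hmem
      exact hz hmem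
    | cast c => exact ⟨c, rfl⟩
  · show p.1 a b ↔ D.rel (G a.castSucc) (G b.castSucc)
    rw [hG, Fin.snoc_castSucc, Fin.snoc_castSucc]
    exact hgr a b

lemma ominus_cert_subset {m : ℕ} (D : Causet) :
    Ominus (convexSubords D.rel (m+2)) ⊆ convexSubords D.rel (m+1) := by
  rintro o ⟨q, rfl, p, hp, hq⟩
  obtain ⟨p', hpp', hp'⟩ := hp
  exact ⟨q, rfl, repConvex_comp hp' (repConvex_iso (toNOrder_eq.mp hpp') hq)⟩

lemma ominus_level {m : ℕ} (D : Causet) {f : Fin (m+2) → D.carrier}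
    (hf : Function.Injective f) :
    Ominus (convexSubords D.rel (m+2)) = convexSubords D.rel (m+1) := by
  apply Set.Subset.antisymm (ominus_cert_subset D)
  rintro o ⟨p, rfl, hp⟩
  exact subord_in_ominus D hf hp

def emptyCauset : Causet where
  carrier := Empty
  rel := fun a _ => a.elim
  countable := inferInstance
  trans := fun {a} => a.elim
  irrefl := fun a => a.elim
  locFin := fun a => a.elim

/-- a node `Γ` of convex-covtree at level `n = m + 1` is maximal (no
node `Δ` of `(n+1)`-orders has `O⁻(Δ) = Γ`) iff `Γ` is a singleton `{C}` and every
certificate of `Γ` is order-isomorphic to `C`. -/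
theorem stmt_11 (m : ℕ) (Γ : Set (NOrder (m + 1))) (hΓ : IsNodeCC Γ) :
    (¬ ∃ Δ : Set (NOrder (m + 2)), IsNodeCC Δ ∧ Ominus Δ = Γ) ↔
      (∃ p : FinSPO (m + 1), Γ = {toNOrder p} ∧
        ∀ C : Causet, IsCert C Γ → IsoToRep C p) := by
  constructor
  · intro hmax
    have hΓne : Γ.Nonempty := by
      rcases Set.eq_empty_or_nonempty Γ with rfl | h
      · exfalso
        apply hmax
        refine ⟨∅, ⟨emptyCauset, ?_⟩, ?_⟩
        · ext o
          simp only [convexSubords, Set.mem_setOf_eq, Set.mem_empty_iff_false, iff_false,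
            IsCert]
          rintro ⟨p, _, g, _⟩
          exact (g 0).elim
        · ext o
          simp [Ominus]
      · exact h
    have hsmall : ∀ D : Causet, IsCert D Γ →
        ¬ ∃ f : Fin (m+2) → D.carrier, Function.Injective f := by
      rintro D hD ⟨f, hf⟩
      exact hmax ⟨convexSubords D.rel (m+2), ⟨D, rfl⟩, by rw [ominus_level D hf]; exact hD⟩
    have hbij : ∀ D : Causet, IsCert D Γ → ∀ h : Fin (m+1) → D.carrier,
        Function.Injective h → Function.Bijective h := by
      intro D hD h hi
      refine ⟨hi, fun y => ?_⟩
      by_contra hy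
      push_neg at hy
      exact hsmall D hD ⟨Fin.snoc h y, snoc_injective hi (by rintro ⟨a, ha⟩; exact hy a ha)⟩
    obtain ⟨D, hD⟩ := hΓ
    obtain ⟨o, ho⟩ := hΓne
    have ho' : o ∈ convexSubords D.rel (m+1) := by rw [hD]; exact ho
    obtain ⟨p, hop, g, hgi, hgc, hgr⟩ := ho'
    have hpΓ : toNOrder p ∈ Γ := hop ▸ ho
    have hgb : Function.Bijective g := hbij D hD g hgi
    refine ⟨p, ?_, ?_⟩
    · apply Set.eq_singleton_iff_unique_mem.mpr
      refine ⟨hpΓ, fun o' ho' => ?_⟩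
      rw [← hD] at ho'
      obtain ⟨p', rfl, g', hg'i, hg'c, hg'r⟩ := ho'
      have hg'b : Function.Bijective g' := hbij D hD g' hg'i
      refine toNOrder_eq.mpr ⟨(Equiv.ofBijective g' hg'b).trans
        (Equiv.ofBijective g hgb).symm, fun a b => ?_⟩
      rw [hg'r a b, hgr]
      have e1 : g ((Equiv.ofBijective g hgb).symm (g' a)) = g' a :=
        (Equiv.ofBijective g hgb).apply_symm_apply (g' a)
      have e2 : g ((Equiv.ofBijective g hgb).symm (g' b)) = g' b :=
        (Equiv.ofBijective g hgb).apply_symm_apply (g' b)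
      simp only [Equiv.trans_apply, Equiv.ofBijective_apply]
      rw [e1, e2]
    · intro C hC
      have hmem : toNOrder p ∈ convexSubords C.rel (m+1) := by rw [hC]; exact hpΓ
      obtain ⟨p'', hpp'', g'', hg''i, hg''c, hg''r⟩ := hmem
      exact isoToRep_of_isoFin (toNOrder_eq.mp hpp'')
        ⟨g'', hbij C hC g'' hg''i, hg''r⟩
  · rintro ⟨p, hΓp, hcert⟩ ⟨Δ, ⟨D, hD⟩, hOD⟩
    have hpΓ : toNOrder p ∈ Γ := by rw [hΓp]; rfl
    have hpO : toNOrder p ∈ Ominus Δ := by rw [hOD]; exact hpΓ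
    obtain ⟨q, hpq, P, hPΔ, hqP⟩ := hpO
    rw [← hD] at hPΔ
    obtain ⟨P', hPP', f, hfi, _, _⟩ := hPΔ
    have hDcert : IsCert D Γ := by
      unfold IsCert
      rw [← ominus_level D hfi, hD, hOD]
    obtain ⟨g, hgb, _⟩ := hcert D hDcert
    have hinj : Function.Injective ((Equiv.ofBijective g hgb).symm ∘ f) :=
      (Equiv.injective _).comp hfi
    have := Fintype.card_le_of_injective _ hinj
    simp at this
end
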